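/- arXiv:2311.05756 — 10 statements merged into one kernel-verified Lean document; each statement's English description precedes it below -/
import Mathlib

section
/- Let (X,d) be a metric space, Y a real normed vector space, x_1,…,x_n points in X, z*, ẑ : {1,…,n} → {1,…,M} label vectors, μ*, μ̂ : {1,…,M} → Y level vectors, ω : [0,∞) → [0,∞) nondecreasing, and g : X → Y a function satisfying ‖g(u) − g(v)‖ ≤ 2·ω(d(u,v)) for all u,v ∈ X and g(x_i) = μ*_{z*_i} − μ̂_{ẑ_i} for all i ∈ {1,…,n}. Suppose (a) there exists γ > 0 with ‖μ*_k − μ*_ℓ‖ ≥ γ for all k ≠ ℓ in {1,…,M}, and (b) there exists ρ > 0 such that the ρ-neighbor graph G_ρ of x_1,…,x_n is connected and 2·ω(ρ) < γ/M. Then for all i, j ∈ {1,…,n}, ẑ_i = ẑ_j implies z*_i = z*_j. -/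
lemma tele_aux {Y : Type*} [NormedAddCommGroup Y] (f : ℕ → Y) (ε : ℝ) :
    ∀ L : ℕ, (∀ k < L, ‖f k - f (k+1)‖ ≤ ε) → ‖f 0 - f L‖ ≤ L * ε := by
  intro L
  induction L with
  | zero => simp
  | succ L ih =>
    intro h
    have h1 := ih (fun k hk => h k (Nat.lt_succ_of_lt hk))
    have h2 := h L (Nat.lt_succ_self L)
    calc ‖f 0 - f (L+1)‖ ≤ ‖f 0 - f L‖ + ‖f L - f (L+1)‖ :=
          norm_sub_le_norm_sub_add_norm_sub _ _ _
      _ ≤ L * ε + ε := add_le_add h1 h2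
      _ = (L+1 : ℕ) * ε := by push_cast; ring

lemma chain_aux {Y : Type*} [NormedAddCommGroup Y] {V : Type*} {M : ℕ}
    (val : V → Y) (lab : V → Fin M) (ε γ : ℝ) (hε : 0 ≤ ε)
    (hMε : M * ε < γ)
    (hcol : ∀ a b : V, lab a = lab b → ‖val a - val b‖ < γ → val a = val b) :
    ∀ L : ℕ, ∀ v : ℕ → V, (∀ k < L, ‖val (v k) - val (v (k+1))‖ ≤ ε) →
      ‖val (v 0) - val (v L)‖ ≤ M * ε := by
  intro L
  induction L using Nat.strong_induction_on with
  | _ L ih =>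
    intro v hv
    by_cases hL : L ≤ M
    · calc ‖val (v 0) - val (v L)‖ ≤ L * ε := tele_aux (fun k => val (v k)) ε L hv
        _ ≤ M * ε := mul_le_mul_of_nonneg_right (by exact_mod_cast hL) hε
    · push_neg at hL
      -- pigeonhole among v 0, ..., v M
      obtain ⟨s, t, hst, heq⟩ := Fintype.exists_ne_map_eq_of_card_lt
        (fun k : Fin (M+1) => lab (v k)) (by simp)
      -- wlog s < t
      obtain ⟨s', t', hlt, hle, hlab⟩ :
          ∃ s' t' : ℕ, s' < t' ∧ t' ≤ M ∧ lab (v s') = lab (v t') := by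
        rcases lt_or_gt_of_ne hst with h | h
        · exact ⟨s, t, h, Nat.lt_succ_iff.mp t.isLt, heq⟩
        · exact ⟨t, s, h, Nat.lt_succ_iff.mp s.isLt, heq.symm⟩
      have hsub : ‖val (v s') - val (v t')‖ ≤ (t' - s' : ℕ) * ε := by
        have := tele_aux (fun k => val (v (s' + k))) ε (t' - s')
          (fun k hk => hv (s' + k) (by omega))
        simpa [Nat.add_sub_cancel' (le_of_lt hlt)] using this
      have hvlt : ‖val (v s') - val (v t')‖ < γ := by
        calc ‖val (v s') - val (v t')‖ ≤ (t' - s' : ℕ) * ε := hsub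
          _ ≤ M * ε := mul_le_mul_of_nonneg_right (by exact_mod_cast Nat.sub_le_of_le_add (by omega)) hε
          _ < γ := hMε
      have hvaleq : val (v s') = val (v t') := hcol _ _ hlab hvlt
      -- splice
      set w : ℕ → V := fun k => v (if k ≤ s' then k else k + (t' - s')) with hw
      have hchain : ∀ k < L - (t' - s'), ‖val (w k) - val (w (k+1))‖ ≤ ε := by
        intro k hk
        rcases lt_trichotomy k s' with h | h | h
        · have e1 : w k = v k := by simp only [hw]; rw [if_pos (by omega)]
          have e2 : w (k+1) = v (k+1) := by simp only [hw]; rw [if_pos (by omega)]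
          rw [e1, e2]; exact hv k (by omega)
        · have e1 : w k = v s' := by simp only [hw]; rw [if_pos (by omega)]; congr 1
          have e2 : w (k+1) = v (t'+1) := by
            simp only [hw]; rw [if_neg (by omega)]; congr 1; omega
          rw [e1, e2, hvaleq]
          exact hv t' (by omega)
        · have e1 : w k = v (k + (t' - s')) := by
            simp only [hw]; rw [if_neg (by omega)]
          have e2 : w (k+1) = v (k + (t' - s') + 1) := by
            simp only [hw]; rw [if_neg (by omega)]; congr 1; omega
          rw [e1, e2]
          exact hv (k + (t' - s')) (by omega)
      have hres := ih (L - (t' - s')) (by omega) w hchain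
      have e0 : w 0 = v 0 := by simp only [hw]; rw [if_pos (Nat.zero_le _)]
      have eL : w (L - (t' - s')) = v L := by
        simp only [hw]; rw [if_neg (by omega)]; congr 1; omega
      rwa [e0, eL] at hres


/-- The ρ-neighbor graph of a point cloud `x : Fin n → X`: vertices `{1,…,n}`,
with an edge between `i ≠ j` iff `d(x i, x j) ≤ ρ`. -/
def neighborGraph {X : Type*} [MetricSpace X] {n : ℕ} (x : Fin n → X) (ρ : ℝ) :
    SimpleGraph (Fin n) where
  Adj i j := i ≠ j ∧ dist (x i) (x j) ≤ ρ
  symm := by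
    constructor
    intro i j h
    exact ⟨h.1.symm, by rw [dist_comm]; exact h.2⟩
  loopless := by
    constructor
    intro i h
    exact h.1 rfl

theorem stmt0 {X Y : Type*} [MetricSpace X] [NormedAddCommGroup Y] [NormedSpace ℝ Y]
    {n M : ℕ} (x : Fin n → X) (zstar zhat : Fin n → Fin M)
    (μstar μhat : Fin M → Y) (ω : ℝ → ℝ) (hω : Monotone ω)
    (g : X → Y)
    (hg : ∀ u v : X, ‖g u - g v‖ ≤ 2 * ω (dist u v))
    (hfit : ∀ i : Fin n, g (x i) = μstar (zstar i) - μhat (zhat i))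
    (γ : ℝ) (hγ : 0 < γ)
    (hsep : ∀ k ℓ : Fin M, k ≠ ℓ → γ ≤ ‖μstar k - μstar ℓ‖)
    (ρ : ℝ) (hρ : 0 < ρ)
    (hconn : (neighborGraph x ρ).Connected)
    (hgap : 2 * ω ρ < γ / M) :
    ∀ i j : Fin n, zhat i = zhat j → zstar i = zstar j := by
  intro i j hz
  set ε : ℝ := 2 * ω ρ with hεdef
  have hM : 0 < M := (zhat i).pos
  have hε : 0 ≤ ε := by
    have h1 := hg (x i) (x i)
    simp only [sub_self, norm_zero, dist_self] at h1
    have h2 : ω 0 ≤ ω ρ := hω (le_of_lt hρ)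
    linarith
  have hMε : (M : ℝ) * ε < γ := by
    have hMpos : (0 : ℝ) < M := by exact_mod_cast hM
    have := mul_lt_mul_of_pos_left hgap hMpos
    rwa [mul_div_cancel₀ γ (ne_of_gt hMpos)] at this
  -- key: any two same-ẑ points with g-values < γ apart have equal g-values
  have hcol : ∀ a b : Fin n, zhat a = zhat b → ‖g (x a) - g (x b)‖ < γ →
      g (x a) = g (x b) := by
    intro a b hab hlt
    have hdiff : g (x a) - g (x b) = μstar (zstar a) - μstar (zstar b) := by
      rw [hfit a, hfit b, hab]; abel
    rw [hdiff] at hlt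
    have hzs : zstar a = zstar b := by
      by_contra hne
      exact absurd hlt (not_lt.mpr (hsep _ _ hne))
    rw [hfit a, hfit b, hab, hzs]
  obtain ⟨p⟩ := hconn.preconnected i j
  have hchain : ∀ k < p.length,
      ‖g (x (p.getVert k)) - g (x (p.getVert (k+1)))‖ ≤ ε := by
    intro k hk
    have hadj := p.adj_getVert_succ hk
    have hd : dist (x (p.getVert k)) (x (p.getVert (k+1))) ≤ ρ := hadj.2
    calc ‖g (x (p.getVert k)) - g (x (p.getVert (k+1)))‖
        ≤ 2 * ω (dist (x (p.getVert k)) (x (p.getVert (k+1)))) := hg _ _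
      _ ≤ 2 * ω ρ := by have := hω hd; linarith
  have hkey := chain_aux (fun a : Fin n => g (x a)) zhat ε γ hε hMε hcol
    p.length (fun k => p.getVert k) hchain
  simp only [p.getVert_zero, p.getVert_length] at hkey
  have hlt : ‖g (x i) - g (x j)‖ < γ := lt_of_le_of_lt hkey hMε
  have hdiff : g (x i) - g (x j) = μstar (zstar i) - μstar (zstar j) := by
    rw [hfit i, hfit j, hz]; abel
  rw [hdiff] at hlt
  by_contra hne
  exact absurd hlt (not_lt.mpr (hsep _ _ hne))
end

section
/- Let (X,d) be a metric space, Y a real normed vector space, x_1,…,x_n points in X, z*, ẑ : {1,…,n} → {1,…,M} label vectors with z* surjective onto {1,…,M}, μ*, μ̂ : {1,…,M} → Y, ω : [0,∞) → [0,∞) nondecreasing, and g : X → Y satisfying ‖g(u) − g(v)‖ ≤ 2·ω(d(u,v)) for all u,v ∈ X and g(x_i) = μ*_{z*_i} − μ̂_{ẑ_i} for all i. Suppose there exists γ > 0 with ‖μ*_k − μ*_ℓ‖ ≥ γ for all k ≠ ℓ, and there exists ρ > 0 such that the ρ-neighbor graph G_ρ of x_1,…,x_n is connected and 2·ω(ρ)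 < γ/M. Then there exists a permutation π of {1,…,M} such that ẑ_i = π(z*_i) for every i ∈ {1,…,n}; in particular the misclassification rate of ẑ relative to z* (after optimal relabeling) is zero. -/
theorem stmt1 {X Y : Type*} [MetricSpace X] [NormedAddCommGroup Y] [NormedSpace ℝ Y]
    {n M : ℕ} (x : Fin n → X) (zstar zhat : Fin n → Fin M)
    (hsurj : Function.Surjective zstar)
    (μstar μhat : Fin M → Y) (ω : ℝ → ℝ) (hω : Monotone ω)
    (g : X → Y)
    (hg : ∀ u v : X, ‖g u - g v‖ ≤ 2 * ω (dist u v))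
    (hfit : ∀ i : Fin n, g (x i) = μstar (zstar i) - μhat (zhat i))
    (γ : ℝ) (hγ : 0 < γ)
    (hsep : ∀ k ℓ : Fin M, k ≠ ℓ → γ ≤ ‖μstar k - μstar ℓ‖)
    (ρ : ℝ) (hρ : 0 < ρ)
    (hconn : (neighborGraph x ρ).Connected)
    (hgap : 2 * ω ρ < γ / M) :
    ∃ π : Equiv.Perm (Fin M), ∀ i : Fin n, zhat i = π (zstar i) := by
  classical
  obtain ⟨i0⟩ := hconn.nonempty
  have hM : 0 < M := (zstar i0).pos
  set ε := 2 * ω ρ with hεdef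
  have hε0 : 0 ≤ ε := by
    have h1 := hg (x i0) (x i0)
    rw [dist_self] at h1
    have h2 : ω 0 ≤ ω ρ := hω hρ.le
    have h3 : (0:ℝ) ≤ ‖g (x i0) - g (x i0)‖ := norm_nonneg _
    simp only [hεdef]
    linarith
  have hMε : (M:ℝ) * ε < γ := by
    have hM' : (0:ℝ) < M := by exact_mod_cast hM
    have := (lt_div_iff₀ hM').mp hgap
    linarith [this]
  set v : Fin n → Y := fun i => μstar (zstar i) - μhat (zhat i) with hvdef
  -- telescoping bound
  have telescope : ∀ (T : ℕ) (c : ℕ → Fin n),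
      (∀ t < T, ‖v (c t) - v (c (t+1))‖ ≤ ε) → ‖v (c 0) - v (c T)‖ ≤ T * ε := by
    intro T
    induction T with
    | zero => intro c _; simp
    | succ T ih =>
      intro c hc
      have h1 := ih c (fun t ht => hc t (ht.trans (Nat.lt_succ_self T)))
      have h2 := hc T (Nat.lt_succ_self T)
      have h3 : ‖v (c 0) - v (c (T+1))‖ ≤ ‖v (c 0) - v (c T)‖ + ‖v (c T) - v (c (T+1))‖ :=
        norm_sub_le_norm_sub_add_norm_sub _ _ _
      push_cast
      linarith
  -- key lemma
  have key : ∀ (T : ℕ) (c : ℕ → Fin n),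
      (∀ t < T, ‖v (c t) - v (c (t+1))‖ ≤ ε) → zhat (c 0) = zhat (c T) →
      zstar (c 0) = zstar (c T) := by
    intro T
    induction T using Nat.strong_induction_on with
    | _ T IH =>
    intro c hc hb
    rcases Nat.eq_zero_or_pos T with hT0 | hT0
    · rw [hT0]
    by_contra ha
    by_cases hex : ∃ r r', r < r' ∧ r' ≤ T ∧ (r ≠ 0 ∨ r' ≠ T) ∧ zhat (c r) = zhat (c r')
    · obtain ⟨r, r', hlt, hle, hne, hbr⟩ := hex
      have hsub : r' - r < T := by omega
      have h1 : zstar (c r) = zstar (c r') := by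
        have hend : r + (r' - r) = r' := by omega
        have := IH (r' - r) hsub (fun t => c (r + t))
          (fun t ht => hc (r + t) (by omega))
          (by simpa [hend] using hbr)
        simpa [hend] using this
      by_cases hT : r' = T
      · subst hT
        have h2 : zstar (c 0) = zstar (c r) :=
          IH r (by omega) c (fun t ht => hc t (by omega)) (hb.trans hbr.symm)
        exact ha (h2.trans h1)
      · have hr'T : r' < T := lt_of_le_of_ne hle hT
        set k := r' - r with hkdef
        have hk1 : 1 ≤ k := by omega
        have hveq : v (c r) = v (c r') := by
          simp only [hvdef]
          rw [h1, hbr]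
        have h2 : zstar (c 0) = zstar (c T) := by
          have hTk : r < T - k := by omega
          have hmain := IH (T - k) (by omega) (fun t => if t ≤ r then c t else c (t + k))
            ?_ ?_
          · have e0 : (0:ℕ) ≤ r := Nat.zero_le r
            have eT : ¬ (T - k ≤ r) := by omega
            have eT2 : T - k + k = T := by omega
            simpa [e0, eT, eT2] using hmain
          · intro t ht
            by_cases h1' : t + 1 ≤ r
            · have ht' : t ≤ r := by omega
              simp only [if_pos h1', if_pos ht']
              exact hc t (by omega)
            · by_cases h2' : t ≤ r
              · have htr : t = r := by omega
                have hidx : t + 1 + k = r' + 1 := by omega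
                simp only [if_pos h2', if_neg h1']
                rw [hidx, htr, hveq]
                exact hc r' hr'T
              · have hidx : t + 1 + k = (t + k) + 1 := by omega
                simp only [if_neg h2', if_neg h1', hidx]
                exact hc (t + k) (by omega)
          · have e0 : (0:ℕ) ≤ r := Nat.zero_le r
            have eT : ¬ (T - k ≤ r) := by omega
            have eT2 : T - k + k = T := by omega
            simpa [e0, eT, eT2] using hb
        exact ha h2
    · push_neg at hex
      have hinj : Function.Injective (fun t : Fin T => zhat (c t.val)) := by
        intro t t' h
        by_contra hne
        rcases Nat.lt_trichotomy t.val t'.val with hlt | heq | hgt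
        · exact hex t.val t'.val hlt (le_of_lt t'.isLt) (Or.inr (by omega)) h
        · exact hne (Fin.ext heq)
        · exact hex t'.val t.val hgt (le_of_lt t.isLt) (Or.inr (by omega)) h.symm
      have hTM : T ≤ M := by
        simpa using Fintype.card_le_of_injective _ hinj
      have hγle : γ ≤ ‖v (c 0) - v (c T)‖ := by
        have heq : v (c 0) - v (c T) = μstar (zstar (c 0)) - μstar (zstar (c T)) := by
          simp only [hvdef, hb]
          abel
        rw [heq]
        exact hsep _ _ ha
      have htel := telescope T c hc
      have hTM' : (T:ℝ) * ε ≤ (M:ℝ) * ε :=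
        mul_le_mul_of_nonneg_right (by exact_mod_cast hTM) hε0
      linarith
  -- from connectivity: zhat determines zstar
  have step1 : ∀ i j : Fin n, zhat i = zhat j → zstar i = zstar j := by
    intro i j hb
    obtain ⟨w⟩ := hconn.preconnected i j
    have := key w.length (fun t => w.getVert t)
      (fun t ht => by
        have hadj := w.adj_getVert_succ ht
        have hd : dist (x (w.getVert t)) (x (w.getVert (t+1))) ≤ ρ := hadj.2
        have hb1 : ‖g (x (w.getVert t)) - g (x (w.getVert (t+1)))‖ ≤ ε := by
          refine le_trans (hg _ _) ?_
          have := hω hd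
          simp only [hεdef]
          linarith
        simpa [hvdef, ← hfit] using hb1)
      (by simpa [w.getVert_zero, w.getVert_length] using hb)
    simpa [w.getVert_zero, w.getVert_length] using this
  -- build the permutation
  let ψ : Fin M → Fin M := fun b => if h : ∃ i, zhat i = b then zstar h.choose else b
  have hψ : ∀ i, ψ (zhat i) = zstar i := by
    intro i
    have h : ∃ j, zhat j = zhat i := ⟨i, rfl⟩
    simp only [ψ, dif_pos h]
    exact step1 _ _ h.choose_spec
  have hsurjψ : Function.Surjective ψ := by
    intro k
    obtain ⟨i, hi⟩ := hsurj k
    exact ⟨zhat i, by rw [hψ, hi]⟩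
  have hbij : Function.Bijective ψ := Finite.surjective_iff_bijective.mp hsurjψ
  refine ⟨(Equiv.ofBijective ψ hbij).symm, fun i => ?_⟩
  have hh : (Equiv.ofBijective ψ hbij) (zhat i) = zstar i := hψ i
  rw [← hh, Equiv.symm_apply_apply]
end

section
/- Let (X,d) be a metric space, x_1,…,x_n points in X, ω : [0,∞) → [0,∞) nondecreasing, f* : X → ℝ with |f*(u) − f*(v)| ≤ ω(d(u,v)) for all u,v ∈ X, μ* ∈ ℝ^M, and z* : {1,…,n} → {1,…,M} surjective, generating noiseless observations y_i = f*(x_i) + μ*_{z*_i}. Let (f̂, μ̂, ẑ) be any triple with f̂ : X → ℝ satisfying |f̂(u) − f̂(v)| ≤ ω(d(u,v)) for all u,v ∈ X, μ̂ ∈ ℝ^M, ẑ : {1,…,n} → {1,…,M}, which fits the data exactly: f̂(x_i) + μ̂_{ẑ_i} = y_i for all i (as does any minimizer of (1/n)·Σ_i (y_i − μ_{z_i} − f(x_i))² over this constraint set, since the true triple attains objective value 0). If there exists ρ > 0 such that the ρ-neighbor graph G_ρ of x_1,…,x_n is connected and ω(ρ) < (1/(2M))·min_{k≠ℓ} |μ*_k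 − μ*_ℓ|, then there exists a permutation π of {1,…,M} such that ẑ_i = π(z*_i) for every i; i.e., ẑ has zero misclassification error relative to z*. -/
theorem stmt2 {X : Type*} [MetricSpace X] {n M : ℕ}
    (x : Fin n → X) (ω : ℝ → ℝ) (hω : Monotone ω)
    (fstar : X → ℝ) (hfstar : ∀ u v : X, |fstar u - fstar v| ≤ ω (dist u v))
    (μstar : Fin M → ℝ) (zstar : Fin n → Fin M) (hsurj : Function.Surjective zstar)
    (y : Fin n → ℝ) (hy : ∀ i : Fin n, y i = fstar (x i) + μstar (zstar i))
    (fhat : X → ℝ) (hfhat : ∀ u v : X, |fhat u - fhat v| ≤ ω (dist u v))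
    (μhat : Fin M → ℝ) (zhat : Fin n → Fin M)
    (hfit : ∀ i : Fin n, fhat (x i) + μhat (zhat i) = y i)
    (ρ : ℝ) (hρ : 0 < ρ)
    (hconn : (neighborGraph x ρ).Connected)
    (hgap : ∀ k ℓ : Fin M, k ≠ ℓ → ω ρ < (1/(2*(M:ℝ))) * |μstar k - μstar ℓ|) :
    ∃ π : Equiv.Perm (Fin M), ∀ i : Fin n, zhat i = π (zstar i) := by
  classical
  set ε := ω ρ with hεdef
  set v : Fin n → ℝ := fun i => fhat (x i) - fstar (x i) with hvdef
  have hv_eq : ∀ i, v i = μstar (zstar i) - μhat (zhat i) := by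
    intro i
    have h1 := hfit i
    rw [hy i] at h1
    simp only [hvdef]
    linarith
  have hedge : ∀ a b : Fin n, (neighborGraph x ρ).Adj a b → |v a - v b| ≤ 2 * ε := by
    intro a b hab
    obtain ⟨hne, hd⟩ := hab
    have h1 : |fhat (x a) - fhat (x b)| ≤ ε := le_trans (hfhat _ _) (hω hd)
    have h2 : |fstar (x a) - fstar (x b)| ≤ ε := le_trans (hfstar _ _) (hω hd)
    have heq : v a - v b = (fhat (x a) - fhat (x b)) - (fstar (x a) - fstar (x b)) := by
      simp only [hvdef]; ring
    rw [heq]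
    calc |(fhat (x a) - fhat (x b)) - (fstar (x a) - fstar (x b))|
        ≤ |fhat (x a) - fhat (x b)| + |fstar (x a) - fstar (x b)| := abs_sub _ _
      _ ≤ 2 * ε := by linarith
  -- discrete intermediate value / crossing lemma
  have cross : ∀ (i j : Fin n) (θ : ℝ), v i ≤ θ → θ < v j →
      ∃ mv : Fin n, θ < v mv ∧ v mv ≤ θ + 2 * ε := by
    intro i j θ h1 h2
    obtain ⟨p⟩ := hconn.preconnected i j
    have hex : ∃ t, θ < v (p.getVert t) := ⟨p.length, by rwa [p.getVert_length]⟩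
    have hN := Nat.find_spec hex
    have hNle : Nat.find hex ≤ p.length := Nat.find_le (by rwa [p.getVert_length])
    have hN0 : Nat.find hex ≠ 0 := by
      intro h
      rw [h, p.getVert_zero] at hN
      linarith
    obtain ⟨N', hN'⟩ := Nat.exists_eq_succ_of_ne_zero hN0
    have hmin : ¬ θ < v (p.getVert N') := Nat.find_min hex (by omega)
    push_neg at hmin
    have hN'lt : N' < p.length := by omega
    have hadj := p.adj_getVert_succ hN'lt
    have hb := abs_le.mp (hedge _ _ hadj)
    refine ⟨p.getVert (N' + 1), ?_, ?_⟩
    · rw [hN'] at hN; exact hN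
    · linarith [hb.2]
  -- core lemma: zhat classes have constant zstar
  have key : ∀ i j : Fin n, zhat i = zhat j → zstar i ≠ zstar j → v i < v j → False := by
    intro i j hz hzs hvij
    have hM : 0 < M := (zstar i).pos
    have hMR : (0:ℝ) < (M:ℝ) := by exact_mod_cast hM
    have hε0 : (0:ℝ) ≤ ε := by
      have h0 : (0:ℝ) ≤ ω 0 := by
        have := hfstar (x i) (x i)
        simpa [dist_self] using this
      exact le_trans h0 (hω hρ.le)
    have hgap' : ∀ k l : Fin M, k ≠ l → 2 * (M:ℝ) * ε < |μstar k - μstar l| := by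
      intro k l hkl
      have h := hgap k l hkl
      have h2M : (0:ℝ) < 2 * (M:ℝ) := by linarith
      rw [div_mul_eq_mul_div, one_mul, lt_div_iff₀ h2M] at h
      linarith
    have hvji : v j - v i = μstar (zstar j) - μstar (zstar i) := by
      rw [hv_eq i, hv_eq j, hz]; ring
    have hbig : 2 * (M:ℝ) * ε < v j - v i := by
      have h := hgap' (zstar j) (zstar i) (Ne.symm hzs)
      rw [← hvji, abs_of_pos (by linarith)] at h
      exact h
    have hms : ∀ s : Fin M, ∃ mv : Fin n,
        v i + 2*ε*((s:ℕ):ℝ) < v mv ∧ v mv ≤ v i + 2*ε*((s:ℕ):ℝ) + 2*ε := by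
      intro s
      apply cross i j
      · nlinarith [mul_nonneg hε0 (show (0:ℝ) ≤ ((s:ℕ):ℝ) from Nat.cast_nonneg _)]
      · have hs1 : ((s:ℕ):ℝ) ≤ (M:ℝ) := by
          exact_mod_cast s.2.le
        nlinarith [mul_nonneg hε0 (show (0:ℝ) ≤ (M:ℝ) - ((s:ℕ):ℝ) by linarith)]
    choose m hm1 hm2 using hms
    set vert : Fin (M+1) → Fin n := fun s => Fin.cases i m s with hvert
    have hub : ∀ s : Fin (M+1), v (vert s) ≤ v i + 2*ε*((s:ℕ):ℝ) := by
      intro s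
      refine Fin.cases ?_ ?_ s
      · simp [hvert]
      · intro t
        have := hm2 t
        simp only [hvert, Fin.cases_succ, Fin.val_succ]
        push_cast
        linarith
    have hlbv : ∀ s : Fin (M+1), 0 < (s:ℕ) → v i + 2*ε*(((s:ℕ):ℝ) - 1) < v (vert s) := by
      intro s
      refine Fin.cases ?_ ?_ s
      · intro h; simp at h
      · intro t _
        have := hm1 t
        simp only [hvert, Fin.cases_succ, Fin.val_succ]
        push_cast
        linarith
    have inner : ∀ s t : Fin (M+1), (s:ℕ) < (t:ℕ) → zhat (vert s) = zhat (vert t) → False := by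
      intro s t hlt hzz
      have hΔ : v (vert t) - v (vert s) = μstar (zstar (vert t)) - μstar (zstar (vert s)) := by
        rw [hv_eq, hv_eq, hzz]; ring
      have htM : ((t:ℕ):ℝ) ≤ (M:ℝ) := by
        exact_mod_cast Nat.lt_succ_iff.mp t.2
      have hcastst : ((s:ℕ):ℝ) + 1 ≤ ((t:ℕ):ℝ) := by exact_mod_cast hlt
      have hubt := hub t
      have hubs := hub s
      have hlbt := hlbv t (by omega)
      have hpos : 0 < v (vert t) - v (vert s) := by
        nlinarith [mul_nonneg hε0 (show (0:ℝ) ≤ ((t:ℕ):ℝ) - 1 - ((s:ℕ):ℝ) by linarith)]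
      have hle : v (vert t) - v (vert s) ≤ 2 * (M:ℝ) * ε := by
        rcases Nat.eq_zero_or_pos (s:ℕ) with hs0 | hs0
        · have hsi : vert s = i := by
            have : s = 0 := Fin.ext hs0
            rw [this]; simp [hvert]
          rw [hsi]
          have hc0 : ((s:ℕ):ℝ) = 0 := by exact_mod_cast hs0
          nlinarith [mul_nonneg hε0 (show (0:ℝ) ≤ (M:ℝ) - ((t:ℕ):ℝ) by linarith)]
        · have hlbs := hlbv s hs0
          have hs1 : (1:ℝ) ≤ ((s:ℕ):ℝ) := by exact_mod_cast hs0
          nlinarith [mul_nonneg hε0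
            (show (0:ℝ) ≤ (M:ℝ) - ((t:ℕ):ℝ) + ((s:ℕ):ℝ) - 1 by linarith)]
      by_cases hzseq : zstar (vert s) = zstar (vert t)
      · rw [hzseq] at hΔ
        simp at hΔ
        linarith
      · have h := hgap' (zstar (vert t)) (zstar (vert s)) (Ne.symm hzseq)
        rw [← hΔ, abs_of_pos hpos] at h
        linarith
    have hcard : Fintype.card (Fin M) < Fintype.card (Fin (M+1)) := by simp
    obtain ⟨s, t, hst, hzz⟩ :=
      Fintype.exists_ne_map_eq_of_card_lt (fun s : Fin (M+1) => zhat (vert s)) hcard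
    have hvalne : (s:ℕ) ≠ (t:ℕ) := fun h => hst (Fin.ext h)
    rcases hvalne.lt_or_gt with h | h
    · exact inner s t h hzz
    · exact inner t s h hzz.symm
  have claimA : ∀ i j : Fin n, zhat i = zhat j → zstar i = zstar j := by
    intro i j hz
    by_contra hzs
    have hM : 0 < M := (zstar i).pos
    have hMR : (0:ℝ) < (M:ℝ) := by exact_mod_cast hM
    have hε0 : (0:ℝ) ≤ ε := by
      have h0 : (0:ℝ) ≤ ω 0 := by
        have := hfstar (x i) (x i)
        simpa [dist_self] using this
      exact le_trans h0 (hω hρ.le)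
    have hne : v i ≠ v j := by
      intro he
      have h1 : v i - v j = μstar (zstar i) - μstar (zstar j) := by
        rw [hv_eq, hv_eq, hz]; ring
      have h2 := hgap (zstar i) (zstar j) hzs
      rw [← h1, he] at h2
      simp at h2
      rw [hεdef] at hε0
      linarith
    rcases hne.lt_or_gt with h | h
    · exact key i j hz hzs h
    · exact key j i hz.symm (Ne.symm hzs) h
  -- build the permutation
  have hg : ∃ g : Fin M → Fin M, ∀ i, zstar i = g (zhat i) := by
    refine ⟨fun l => if h : ∃ i, zhat i = l then zstar h.choose else l, fun i => ?_⟩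
    have hex : ∃ i', zhat i' = zhat i := ⟨i, rfl⟩
    show zstar i = dite (∃ i', zhat i' = zhat i) (fun h => zstar h.choose) (fun _ => zhat i)
    rw [dif_pos hex]
    exact (claimA _ _ hex.choose_spec).symm
  obtain ⟨g, hgspec⟩ := hg
  have hgsurj : Function.Surjective g := by
    intro k
    obtain ⟨i, rfl⟩ := hsurj k
    exact ⟨zhat i, (hgspec i).symm⟩
  have hgbij : Function.Bijective g := Finite.surjective_iff_bijective.mp hgsurj
  refine ⟨(Equiv.ofBijective g hgbij).symm, fun i => ?_⟩
  rw [hgspec i, Equiv.eq_symm_apply]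
  rfl
end

section
/- Let (X,d) be a metric space, Y a real normed vector space, x_1,…,x_n points in X, z : {1,…,n} → {1,…,M} a surjective label vector, ω : [0,∞) → [0,∞) nondecreasing, Δ : {1,…,M} → Y, and g : X → Y a function satisfying ‖g(u) − g(v)‖ ≤ 2·ω(d(u,v)) for all u,v ∈ X and g(x_i) = Δ_{z_i} for all i. If δ > 0 is such that the cluster graph G_δ(C) of the clusters C_k = {i : z_i = k} is connected, then for all k, ℓ ∈ {1,…,M}: ‖Δ_k − Δ_ℓ‖ ≤ 2(M−1)·ω(δ). -/
/-- The cluster graph of a labeled point cloud: vertices are the labels `{1,…,M}`,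
with an edge between `k ≠ ℓ` iff the cluster distance
`d(C_k, C_ℓ) = min_{i ∈ C_k, j ∈ C_ℓ} d(x_i, x_j)` is at most `δ`, i.e. iff there
are points `i ∈ C_k`, `j ∈ C_ℓ` with `d(x_i, x_j) ≤ δ`. -/
def clusterGraph {X : Type*} [MetricSpace X] {n M : ℕ}
    (x : Fin n → X) (z : Fin n → Fin M) (δ : ℝ) : SimpleGraph (Fin M) where
  Adj k ℓ := k ≠ ℓ ∧ ∃ i j : Fin n, z i = k ∧ z j = ℓ ∧ dist (x i) (x j) ≤ δ
  symm := ⟨by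
    rintro k ℓ ⟨hne, i, j, hi, hj, hd⟩
    exact ⟨hne.symm, j, i, hj, hi, by rwa [dist_comm]⟩⟩
  loopless := ⟨fun k h => h.1 rfl⟩

theorem stmt3 {X Y : Type*} [MetricSpace X] [NormedAddCommGroup Y] [NormedSpace ℝ Y]
    {n M : ℕ} (x : Fin n → X) (z : Fin n → Fin M)
    (hsurj : Function.Surjective z)
    (ω : ℝ → ℝ) (hω : Monotone ω)
    (Δ : Fin M → Y) (g : X → Y)
    (hg : ∀ u v : X, ‖g u - g v‖ ≤ 2 * ω (dist u v))
    (hfit : ∀ i : Fin n, g (x i) = Δ (z i))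
    (δ : ℝ) (hδ : 0 < δ)
    (hconn : (clusterGraph x z δ).Connected) :
    ∀ k ℓ : Fin M, ‖Δ k - Δ ℓ‖ ≤ 2 * ((M:ℝ) - 1) * ω δ := by
  intro k ℓ
  -- ω δ ≥ 0
  obtain ⟨i0, _⟩ := hsurj k
  have hω0 : (0:ℝ) ≤ ω δ := by
    have h1 := hg (x i0) (x i0)
    simp only [sub_self, norm_zero, dist_self] at h1
    have h2 : ω 0 ≤ ω δ := hω hδ.le
    linarith
  -- edge bound
  have hedge : ∀ a b : Fin M, (clusterGraph x z δ).Adj a b → ‖Δ a - Δ b‖ ≤ 2 * ω δ := by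
    rintro a b ⟨-, i, j, hi, hj, hd⟩
    have := hg (x i) (x j)
    rw [hfit i, hfit j, hi, hj] at this
    calc ‖Δ a - Δ b‖ ≤ 2 * ω (dist (x i) (x j)) := this
      _ ≤ 2 * ω δ := by nlinarith [hω hd]
  -- walk bound
  have hwalk : ∀ (a b : Fin M) (p : (clusterGraph x z δ).Walk a b),
      ‖Δ a - Δ b‖ ≤ 2 * (p.length : ℝ) * ω δ := by
    intro a b p
    induction p with
    | nil => simp
    | cons h q ih =>
      rename_i u v w
      calc ‖Δ u - Δ w‖ ≤ ‖Δ u - Δ v‖ + ‖Δ v - Δ w‖ := norm_sub_le_norm_sub_add_norm_sub _ _ _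
        _ ≤ 2 * ω δ + 2 * (q.length : ℝ) * ω δ := add_le_add (hedge u v h) ih
        _ = 2 * (((q.length : ℕ) + 1 : ℕ) : ℝ) * ω δ := by push_cast; ring
  obtain ⟨p⟩ := hconn k ℓ
  have hpath : (p.toPath : (clusterGraph x z δ).Walk k ℓ).IsPath := p.toPath.2
  have hlt : (p.toPath : (clusterGraph x z δ).Walk k ℓ).length < M := by
    simpa using hpath.length_lt
  have hle : ((p.toPath : (clusterGraph x z δ).Walk k ℓ).length : ℝ) ≤ (M:ℝ) - 1 := by
    have h : (p.toPath : (clusterGraph x z δ).Walk k ℓ).length + 1 ≤ M := hlt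
    have h2 : (((p.toPath : (clusterGraph x z δ).Walk k ℓ).length + 1 : ℕ) : ℝ) ≤ (M:ℝ) :=
      Nat.cast_le.mpr h
    push_cast at h2; linarith
  calc ‖Δ k - Δ ℓ‖ ≤ 2 * ((p.toPath : (clusterGraph x z δ).Walk k ℓ).length : ℝ) * ω δ :=
        hwalk k ℓ _
    _ ≤ 2 * ((M:ℝ) - 1) * ω δ := by nlinarith
end

section
/- Let (X,d) be a metric space, x_1,…,x_n points in X, z : {1,…,n} → {1,…,M} surjective, ω : [0,∞) → [0,∞) nondecreasing, and f*, f̂ : X → ℝ two functions each satisfying |f(u) − f(v)| ≤ ω(d(u,v)) for all u,v ∈ X. Suppose μ*, μ̂ ∈ ℝ^M satisfy f̂(x_i) + μ̂_{z_i} = f*(x_i) + μ*_{z_i} for all i ∈ {1,…,n}, and suppose f̂ is empirically zero-mean: Σ_{i=1}^n f̂(x_i) = 0. If δ > 0 is such that the cluster graph G_δ(C) of the clusters C_k = {i : z_i = k} is connected, then max_{k∈{1,…,M}} |μ*_k − μ̂_k| ≤ 2(M−1)·ω(δ) + |(1/n)·Σ_{i=1}^n f*(x_i)|. -/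
theorem stmt4 {X : Type*} [MetricSpace X] {n M : ℕ}
    (x : Fin n → X) (z : Fin n → Fin M) (hsurj : Function.Surjective z)
    (ω : ℝ → ℝ) (hω : Monotone ω)
    (fstar fhat : X → ℝ)
    (hfstar : ∀ u v : X, |fstar u - fstar v| ≤ ω (dist u v))
    (hfhat : ∀ u v : X, |fhat u - fhat v| ≤ ω (dist u v))
    (μstar μhat : Fin M → ℝ)
    (hfit : ∀ i : Fin n, fhat (x i) + μhat (z i) = fstar (x i) + μstar (z i))
    (hzero : ∑ i : Fin n, fhat (x i) = 0)
    (δ : ℝ) (hδ : 0 < δ)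
    (hconn : (clusterGraph x z δ).Connected) :
    ∀ k : Fin M, |μstar k - μhat k|
      ≤ 2 * ((M:ℝ) - 1) * ω δ + |(1/(n:ℝ)) * ∑ i : Fin n, fstar (x i)| := by
  intro k
  obtain ⟨i₀, hi₀⟩ := hsurj k
  have hn : 0 < n := i₀.pos
  have hn' : (0:ℝ) < (n:ℝ) := by exact_mod_cast hn
  have hM : 0 < M := k.pos
  set Δ : Fin M → ℝ := fun a => μstar a - μhat a with hΔdef
  have hΔz : ∀ i : Fin n, Δ (z i) = fhat (x i) - fstar (x i) := by
    intro i
    have := hfit i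
    simp only [hΔdef]
    linarith
  have hωδ : 0 ≤ ω δ := by
    have h0 := hfstar (x i₀) (x i₀)
    simp only [sub_self, abs_zero, dist_self] at h0
    exact h0.trans (hω hδ.le)
  have hadj : ∀ a b : Fin M, (clusterGraph x z δ).Adj a b → |Δ a - Δ b| ≤ 2 * ω δ := by
    rintro a b ⟨-, i, j, hi, hj, hd⟩
    rw [← hi, ← hj, hΔz, hΔz]
    have h1 := hfstar (x i) (x j)
    have h2 := hfhat (x i) (x j)
    have h3 : ω (dist (x i) (x j)) ≤ ω δ := hω hd
    calc |(fhat (x i) - fstar (x i)) - (fhat (x j) - fstar (x j))|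
        = |(fhat (x i) - fhat (x j)) - (fstar (x i) - fstar (x j))| := by ring_nf
      _ ≤ |fhat (x i) - fhat (x j)| + |fstar (x i) - fstar (x j)| := abs_sub _ _
      _ ≤ ω δ + ω δ := add_le_add (h2.trans h3) (h1.trans h3)
      _ = 2 * ω δ := by ring
  have hwalk : ∀ a b : Fin M, ∀ p : (clusterGraph x z δ).Walk a b,
      |Δ a - Δ b| ≤ 2 * (p.length : ℝ) * ω δ := by
    intro a b p
    induction p with
    | nil => simp
    | @cons u v w h p ih =>
      have h1 := hadj u v h
      calc |Δ u - Δ w| ≤ |Δ u - Δ v| + |Δ v - Δ w| := abs_sub_le _ _ _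
        _ ≤ 2 * ω δ + 2 * (p.length : ℝ) * ω δ := add_le_add h1 ih
        _ = 2 * ((SimpleGraph.Walk.cons h p).length : ℝ) * ω δ := by
            simp [SimpleGraph.Walk.length_cons]; push_cast; ring
  have hpair : ∀ a b : Fin M, |Δ a - Δ b| ≤ 2 * ((M:ℝ) - 1) * ω δ := by
    intro a b
    obtain ⟨p⟩ := hconn a b
    have q := p.toPath
    have hlen : (q.1.length : ℝ) ≤ (M:ℝ) - 1 := by
      have := q.2.length_lt
      simp only [Fintype.card_fin] at this
      have : q.1.length + 1 ≤ M := this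
      have : ((q.1.length + 1 : ℕ) : ℝ) ≤ (M:ℝ) := by exact_mod_cast this
      push_cast at this
      linarith
    calc |Δ a - Δ b| ≤ 2 * (q.1.length : ℝ) * ω δ := hwalk a b q.1
      _ ≤ 2 * ((M:ℝ) - 1) * ω δ := by nlinarith
  have hsum : ∑ i : Fin n, Δ (z i) = - ∑ i : Fin n, fstar (x i) := by
    simp only [hΔz, Finset.sum_sub_distrib, hzero]
    ring
  have hdecomp : Δ k = (1/(n:ℝ)) * ∑ i : Fin n, (Δ k - Δ (z i))
      + (1/(n:ℝ)) * ∑ i : Fin n, Δ (z i) := by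
    rw [Finset.sum_sub_distrib, Finset.sum_const, Finset.card_univ, Fintype.card_fin]
    field_simp
    rw [nsmul_eq_mul]; ring
  have hb1 : |(1/(n:ℝ)) * ∑ i : Fin n, (Δ k - Δ (z i))| ≤ 2 * ((M:ℝ) - 1) * ω δ := by
    rw [abs_mul]
    have : |∑ i : Fin n, (Δ k - Δ (z i))| ≤ (n:ℝ) * (2 * ((M:ℝ) - 1) * ω δ) := by
      calc |∑ i : Fin n, (Δ k - Δ (z i))| ≤ ∑ i : Fin n, |Δ k - Δ (z i)| :=
            Finset.abs_sum_le_sum_abs _ _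
        _ ≤ ∑ _i : Fin n, 2 * ((M:ℝ) - 1) * ω δ :=
            Finset.sum_le_sum fun i _ => hpair k (z i)
        _ = (n:ℝ) * (2 * ((M:ℝ) - 1) * ω δ) := by
            rw [Finset.sum_const, Finset.card_univ, Fintype.card_fin]; ring
    calc |(1/(n:ℝ))| * |∑ i : Fin n, (Δ k - Δ (z i))|
        ≤ |(1/(n:ℝ))| * ((n:ℝ) * (2 * ((M:ℝ) - 1) * ω δ)) := by
          apply mul_le_mul_of_nonneg_left this (abs_nonneg _)
      _ = 2 * ((M:ℝ) - 1) * ω δ := by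
          rw [abs_of_pos (by positivity : (0:ℝ) < 1/(n:ℝ))]
          field_simp
  have hb2 : |(1/(n:ℝ)) * ∑ i : Fin n, Δ (z i)|
      = |(1/(n:ℝ)) * ∑ i : Fin n, fstar (x i)| := by
    rw [hsum, mul_neg, abs_neg]
  calc |μstar k - μhat k| = |Δ k| := rfl
    _ ≤ |(1/(n:ℝ)) * ∑ i : Fin n, (Δ k - Δ (z i))|
        + |(1/(n:ℝ)) * ∑ i : Fin n, Δ (z i)| := by
          conv_lhs => rw [hdecomp]
          exact abs_add_le _ _
    _ ≤ 2 * ((M:ℝ) - 1) * ω δ + |(1/(n:ℝ)) * ∑ i : Fin n, fstar (x i)| := by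
        rw [hb2]; exact add_le_add_left hb1 _
end

section
/- Let K be a symmetric positive semidefinite n×n real matrix with eigendecomposition K = V·diag(λ_1,…,λ_n)·Vᵀ, where V is orthogonal and λ_i ≥ 0 for all i. Let τ > 0, let f*, g* ∈ ℝⁿ, and let ε be a random vector in ℝⁿ on a probability space whose coordinates ε_1,…,ε_n are independent with E[ε_i] = 0 and E[ε_i²] = σ². Define the kernel ridge regression fit f̂ = K(K + τI)⁻¹(f* + g* + ε), and the coefficient vectors f̆ = Vᵀf*, ğ = Vᵀg*. Then E[(1/n)·‖f* − f̂‖₂²] ≤ (2/n)·Σ_{i=1}^n τ²·f̆_i²/(λ_i + τ)² + (2/n)·Σ_{i=1}^n (λ_i/(λ_i + τ))²·ğ_i² + (σ²/n)·Σ_{i=1}^n (λ_i/(λ_i + τ))². -/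
open MeasureTheory Matrix

theorem stmt7 {n : ℕ} (K V : Matrix (Fin n) (Fin n) ℝ)
    (hK : K.PosSemidef)
    (lam : Fin n → ℝ) (hlam : ∀ i, 0 ≤ lam i)
    (hV : V * Vᵀ = 1) (hV' : Vᵀ * V = 1)
    (hdecomp : K = V * Matrix.diagonal lam * Vᵀ)
    (τ : ℝ) (hτ : 0 < τ)
    (fstar gstar : Fin n → ℝ)
    {Ω : Type*} [MeasureSpace Ω] [IsProbabilityMeasure (volume : Measure Ω)]
    (ε : Fin n → Ω → ℝ)
    (hmeas : ∀ i, Measurable (ε i))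
    (hindep : ProbabilityTheory.iIndepFun ε volume)
    (σ : ℝ)
    (hint : ∀ i, Integrable (ε i) volume)
    (hmean : ∀ i, ∫ ω, ε i ω = 0)
    (hvar : ∀ i, ∫ ω, (ε i ω)^2 = σ^2)
    (fhat : Ω → Fin n → ℝ)
    (hfhat : ∀ ω : Ω, fhat ω
      = (K * (K + τ • (1 : Matrix (Fin n) (Fin n) ℝ))⁻¹).mulVec
          (fun i => fstar i + gstar i + ε i ω))
    (fbreve gbreve : Fin n → ℝ)
    (hfb : fbreve = Vᵀ.mulVec fstar) (hgb : gbreve = Vᵀ.mulVec gstar) :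
    ∫ ω, (1/(n:ℝ)) * ∑ i, (fstar i - fhat ω i)^2
      ≤ (2/(n:ℝ)) * ∑ i, τ^2 * (fbreve i)^2 / (lam i + τ)^2
        + (2/(n:ℝ)) * ∑ i, (lam i / (lam i + τ))^2 * (gbreve i)^2
        + (σ^2/(n:ℝ)) * ∑ i, (lam i / (lam i + τ))^2 := by
  have hlτ : ∀ i, 0 < lam i + τ := fun i => by linarith [hlam i]
  have hlτ' : ∀ i, lam i + τ ≠ 0 := fun i => (hlτ i).ne'
  set d : Fin n → ℝ := fun i => lam i / (lam i + τ) with hd_def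
  set u : Fin n → Ω → ℝ := fun i ω => ∑ j, V j i * ε j ω with hu_def
  set a : Fin n → ℝ := fun i => τ / (lam i + τ) * fbreve i - d i * gbreve i with ha_def
  -- matrix identities
  have sandwich : ∀ D E : Matrix (Fin n) (Fin n) ℝ, (V*D*Vᵀ)*(V*E*Vᵀ) = V*(D*E)*Vᵀ := by
    intro D E
    calc (V*D*Vᵀ)*(V*E*Vᵀ) = V*(D*((Vᵀ*V)*(E*Vᵀ))) := by simp only [Matrix.mul_assoc]
    _ = V*(D*E)*Vᵀ := by rw [hV', Matrix.one_mul]; simp only [Matrix.mul_assoc]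
  have hN : K + τ • (1 : Matrix (Fin n) (Fin n) ℝ) = V * Matrix.diagonal (fun i => lam i + τ) * Vᵀ := by
    have h1 : Matrix.diagonal (fun i => lam i + τ) = Matrix.diagonal lam + τ • (1 : Matrix (Fin n) (Fin n) ℝ) := by
      rw [Matrix.smul_one_eq_diagonal, Matrix.diagonal_add]
    rw [hdecomp, h1, Matrix.mul_add, Matrix.add_mul, mul_smul_comm, Matrix.mul_one, smul_mul_assoc, hV]
  have hNinv : (K + τ • (1 : Matrix (Fin n) (Fin n) ℝ))⁻¹ = V * Matrix.diagonal (fun i => (lam i + τ)⁻¹) * Vᵀ := by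
    apply Matrix.inv_eq_right_inv
    rw [hN, sandwich, Matrix.diagonal_mul_diagonal]
    have h2 : (fun i => (lam i + τ) * (lam i + τ)⁻¹) = fun _ => (1:ℝ) :=
      funext fun i => mul_inv_cancel₀ (hlτ' i)
    rw [h2, Matrix.diagonal_one, Matrix.mul_one, hV]
  have hM : K * (K + τ • (1 : Matrix (Fin n) (Fin n) ℝ))⁻¹ = V * Matrix.diagonal d * Vᵀ := by
    rw [hNinv, hdecomp, sandwich, Matrix.diagonal_mul_diagonal, hd_def]
    simp only [div_eq_mul_inv]
  have horth : ∀ x : Fin n → ℝ, ∑ i, ((V *ᵥ x) i)^2 = ∑ i, (x i)^2 := by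
    intro x
    have h1 : ∑ i, ((V *ᵥ x) i)^2 = (V *ᵥ x) ⬝ᵥ (V *ᵥ x) := by simp [dotProduct, sq]
    have h2 : (V *ᵥ x) ᵥ* V = x := by
      rw [← Matrix.transpose_transpose V, Matrix.vecMul_transpose, Matrix.transpose_transpose,
        Matrix.mulVec_mulVec, hV', Matrix.one_mulVec]
    rw [h1, Matrix.dotProduct_mulVec, h2]
    simp [dotProduct, sq]
  have hfs : V *ᵥ fbreve = fstar := by
    rw [hfb, Matrix.mulVec_mulVec, hV, Matrix.one_mulVec]
  -- pointwise identity
  have hpt : ∀ ω, ∑ i, (fstar i - fhat ω i)^2 = ∑ i, (a i - d i * u i ω)^2 := by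
    intro ω
    have hdiff : (fun i => fstar i - fhat ω i) = V *ᵥ (fun i => a i - d i * u i ω) := by
      have hVtv : Vᵀ *ᵥ (fun i => fstar i + gstar i + ε i ω) = fun i => fbreve i + gbreve i + u i ω := by
        funext i
        simp [Matrix.mulVec, dotProduct, hfb, hgb, hu_def, Finset.sum_add_distrib, mul_add,
          Matrix.transpose_apply]
      have h3 : (fun i => a i - d i * u i ω)
          = fbreve - (Matrix.diagonal d *ᵥ (fun i => fbreve i + gbreve i + u i ω)) := by
        funext i
        have hne : lam i + τ ≠ 0 := hlτ' i
        simp only [Pi.sub_apply, Matrix.mulVec_diagonal, ha_def, hd_def]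
        field_simp
        ring
      rw [h3, Matrix.mulVec_sub, hfs, hfhat, hM]
      rw [← Matrix.mulVec_mulVec, ← Matrix.mulVec_mulVec, hVtv]
      rfl
    calc ∑ i, (fstar i - fhat ω i)^2 = ∑ i, ((V *ᵥ (fun i => a i - d i * u i ω)) i)^2 := by
          rw [← hdiff]
    _ = ∑ i, (a i - d i * u i ω)^2 := horth _
  -- reduce to integral of F
  set F : Ω → ℝ := fun ω => ∑ i, (a i - d i * u i ω)^2 with hF_def
  have hLHS : ∫ ω, (1/(n:ℝ)) * ∑ i, (fstar i - fhat ω i)^2 = (1/(n:ℝ)) * ∫ ω, F ω := by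
    simp_rw [hpt]
    exact integral_const_mul _ _
  rw [hLHS]
  by_cases hF : Integrable F volume
  case neg =>
    rw [integral_undef hF, mul_zero]
    positivity
  -- main case
  have hu_meas : ∀ i, Measurable (u i) := fun i =>
    Finset.measurable_sum _ (fun j _ => (hmeas j).const_mul _)
  have hu_int : ∀ i, Integrable (u i) := fun i =>
    integrable_finset_sum _ (fun j _ => (hint j).const_mul _)
  have hT_int : ∀ i, Integrable (fun ω => (a i - d i * u i ω)^2) := by
    intro i
    have hm : Measurable (fun ω => (a i - d i * u i ω)^2) :=
      (measurable_const.sub ((hu_meas i).const_mul (d i))).pow_const 2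
    refine hF.mono' hm.aestronglyMeasurable (Filter.Eventually.of_forall fun ω => ?_)
    rw [Real.norm_eq_abs, abs_of_nonneg (sq_nonneg _)]
    show (a i - d i * u i ω)^2 ≤ ∑ j, (a j - d j * u j ω)^2
    exact Finset.single_le_sum (f := fun j => (a j - d j * u j ω)^2)
      (fun j _ => sq_nonneg _) (Finset.mem_univ i)
  have hY2_int : ∀ i, Integrable (fun ω => (d i * u i ω)^2) := by
    intro i
    have hid : (fun ω => (d i * u i ω)^2)
        = fun ω => (a i - d i * u i ω)^2 + (2 * a i * d i) * u i ω - a i^2 := by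
      funext ω; ring
    rw [hid]
    exact ((hT_int i).add ((hu_int i).const_mul _)).sub (integrable_const _)
  have hu_mean : ∀ i, ∫ ω, u i ω = 0 := by
    intro i
    have : ∫ ω, u i ω = ∑ j, ∫ ω, V j i * ε j ω :=
      integral_finset_sum _ (fun j _ => (hint j).const_mul _)
    rw [this]
    simp [integral_const_mul, hmean]
  have hvar_u : ∀ i, Integrable (fun ω => (u i ω)^2) → ∫ ω, (u i ω)^2 = σ^2 := by
    intro i hIu
    set h : Fin n → Fin n → Ω → ℝ := fun j k ω => (V j i * ε j ω) * (V k i * ε k ω) with hh_def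
    have hexp : ∀ ω, (u i ω)^2 = ∑ j, ∑ k, h j k ω := by
      intro ω
      simp only [hu_def, hh_def, sq]
      rw [Finset.sum_mul_sum]
    have hcross_int : ∀ j k, j ≠ k → Integrable (h j k) := by
      intro j k hjk
      have hid : h j k = fun ω => (V j i * V k i) * (ε j ω * ε k ω) := by funext ω; ring
      rw [hid]
      exact ((hindep.indepFun hjk).integrable_mul (hint j) (hint k)).const_mul _
    have hoff_int : Integrable (fun ω => ∑ j, ∑ k ∈ Finset.univ.erase j, h j k ω) :=
      integrable_finset_sum _ (fun j _ => integrable_finset_sum _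
        (fun k hk => hcross_int j k (Ne.symm (Finset.mem_erase.mp hk).1)))
    have hdiagsum_int : Integrable (fun ω => ∑ j, h j j ω) := by
      have hid : (fun ω => ∑ j, h j j ω)
          = fun ω => (u i ω)^2 - ∑ j, ∑ k ∈ Finset.univ.erase j, h j k ω := by
        funext ω
        rw [hexp ω]
        have hsp : ∀ j, ∑ k, h j k ω = ∑ k ∈ Finset.univ.erase j, h j k ω + h j j ω :=
          fun j => (Finset.sum_erase_add _ _ (Finset.mem_univ j)).symm
        simp_rw [hsp, Finset.sum_add_distrib]
        ring
      rw [hid]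
      exact hIu.sub hoff_int
    have hdiag_int : ∀ j, Integrable (h j j) := by
      intro j
      refine hdiagsum_int.mono'
        ((((hmeas j).const_mul _).mul ((hmeas j).const_mul _)).aestronglyMeasurable)
        (Filter.Eventually.of_forall fun ω => ?_)
      have h0 : ∀ l, 0 ≤ h l l ω := fun l => mul_self_nonneg _
      rw [Real.norm_eq_abs, abs_of_nonneg (h0 j)]
      exact Finset.single_le_sum (fun l _ => h0 l) (Finset.mem_univ j)
    have hall_int : ∀ j k, Integrable (h j k) := by
      intro j k
      rcases eq_or_ne j k with rfl | hjk
      · exact hdiag_int j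
      · exact hcross_int j k hjk
    have hint_swap : ∫ ω, (u i ω)^2 = ∑ j, ∑ k, ∫ ω, h j k ω := by
      simp_rw [hexp]
      rw [integral_finset_sum _ (fun j _ => integrable_finset_sum _ (fun k _ => hall_int j k))]
      exact Finset.sum_congr rfl fun j _ => integral_finset_sum _ (fun k _ => hall_int j k)
    have hcross_zero : ∀ j k, j ≠ k → ∫ ω, h j k ω = 0 := by
      intro j k hjk
      have h1 : ∫ ω, h j k ω = (V j i * V k i) * ∫ ω, ε j ω * ε k ω := by
        rw [← integral_const_mul]
        congr 1; funext ω; ring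
      have h2 : ∫ ω, ε j ω * ε k ω = (∫ ω, ε j ω) * ∫ ω, ε k ω :=
        (hindep.indepFun hjk).integral_fun_mul_eq_mul_integral (hmeas j).aestronglyMeasurable
          (hmeas k).aestronglyMeasurable
      rw [h1, h2, hmean j, hmean k]
      ring
    have hdiag_val : ∀ j, ∫ ω, h j j ω = V j i^2 * σ^2 := by
      intro j
      have h1 : ∫ ω, h j j ω = (V j i * V j i) * ∫ ω, (ε j ω)^2 := by
        rw [← integral_const_mul]
        congr 1; funext ω; ring
      rw [h1, hvar j]
      ring
    have hVcol : ∑ j, V j i^2 = 1 := by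
      have hc := congrArg (fun M : Matrix (Fin n) (Fin n) ℝ => M i i) hV'
      simpa [Matrix.mul_apply, Matrix.transpose_apply, sq] using hc
    have hrow : ∀ j, ∑ k, ∫ ω, h j k ω = V j i^2 * σ^2 := by
      intro j
      rw [← Finset.sum_erase_add _ _ (Finset.mem_univ j), hdiag_val j,
        Finset.sum_eq_zero (fun k hk => hcross_zero j k (Ne.symm (Finset.mem_erase.mp hk).1)),
        zero_add]
    rw [hint_swap]
    simp_rw [hrow]
    rw [← Finset.sum_mul, hVcol, one_mul]
  have hT_val : ∀ i, ∫ ω, (a i - d i * u i ω)^2 = a i^2 + d i^2 * σ^2 := by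
    intro i
    have hYsq : ∫ ω, (d i * u i ω)^2 = d i^2 * σ^2 := by
      rcases eq_or_ne (d i) 0 with h0 | h0
      · simp [h0]
      · have hIu : Integrable (fun ω => (u i ω)^2) := by
          have hc := (hY2_int i).const_mul (((d i)^2)⁻¹)
          have hid : (fun ω => ((d i)^2)⁻¹ * (d i * u i ω)^2) = fun ω => (u i ω)^2 := by
            funext ω
            field_simp
          rwa [hid] at hc
        have h1 : ∫ ω, (d i * u i ω)^2 = d i^2 * ∫ ω, (u i ω)^2 := by
          rw [← integral_const_mul]
          congr 1; funext ω; ring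
        rw [h1, hvar_u i hIu]
    calc ∫ ω, (a i - d i * u i ω)^2
        = ∫ ω, ((d i * u i ω)^2 + ((-2) * a i * d i) * u i ω + a i^2) := by
          congr 1; funext ω; ring
      _ = (∫ ω, (d i * u i ω)^2) + (∫ ω, ((-2) * a i * d i) * u i ω) + ∫ ω, (a i^2 : ℝ) := by
          have hI2 : Integrable (fun ω => ((-2) * a i * d i) * u i ω) := (hu_int i).const_mul _
          have hI1 : Integrable (fun ω => (d i * u i ω)^2 + ((-2) * a i * d i) * u i ω) :=
            (hY2_int i).add hI2
          rw [integral_add hI1 (integrable_const _), integral_add (hY2_int i) hI2]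
      _ = a i^2 + d i^2 * σ^2 := by
          rw [hYsq, integral_const_mul, hu_mean i, integral_const]
          simp
          ring
  have hF_val : ∫ ω, F ω = ∑ i, (a i^2 + d i^2 * σ^2) := by
    calc ∫ ω, F ω = ∑ i, ∫ ω, (a i - d i * u i ω)^2 :=
        integral_finset_sum _ (fun i _ => hT_int i)
      _ = ∑ i, (a i^2 + d i^2 * σ^2) := Finset.sum_congr rfl fun i _ => hT_val i
  rw [hF_val]
  have key : ∀ i ∈ Finset.univ, a i^2 + d i^2 * σ^2
      ≤ 2 * (τ^2 * (fbreve i)^2 / (lam i + τ)^2) + 2 * ((lam i / (lam i + τ))^2 * (gbreve i)^2)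
        + σ^2 * (lam i / (lam i + τ))^2 := by
    intro i _
    have hne : lam i + τ ≠ 0 := hlτ' i
    have hp : (τ / (lam i + τ) * fbreve i)^2 = τ^2 * (fbreve i)^2 / (lam i + τ)^2 := by
      field_simp
    have ha2 : a i^2 ≤ 2 * (τ / (lam i + τ) * fbreve i)^2 + 2 * (d i * gbreve i)^2 := by
      have haid : a i = τ / (lam i + τ) * fbreve i - d i * gbreve i := rfl
      nlinarith [sq_nonneg (τ / (lam i + τ) * fbreve i + d i * gbreve i)]
    have hdq : (d i * gbreve i)^2 = (lam i / (lam i + τ))^2 * (gbreve i)^2 := by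
      simp only [hd_def]
      ring
    have hds : d i^2 * σ^2 = σ^2 * (lam i / (lam i + τ))^2 := by
      simp only [hd_def]
      ring
    rw [hp, hdq] at ha2
    linarith
  calc (1/(n:ℝ)) * ∑ i, (a i^2 + d i^2 * σ^2)
      ≤ (1/(n:ℝ)) * ∑ i, (2 * (τ^2 * (fbreve i)^2 / (lam i + τ)^2)
          + 2 * ((lam i / (lam i + τ))^2 * (gbreve i)^2) + σ^2 * (lam i / (lam i + τ))^2) :=
        mul_le_mul_of_nonneg_left (Finset.sum_le_sum key) (by positivity)
    _ = (2/(n:ℝ)) * ∑ i, τ^2 * (fbreve i)^2 / (lam i + τ)^2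
        + (2/(n:ℝ)) * ∑ i, (lam i / (lam i + τ))^2 * (gbreve i)^2
        + (σ^2/(n:ℝ)) * ∑ i, (lam i / (lam i + τ))^2 := by
      rw [Finset.sum_add_distrib, Finset.sum_add_distrib, ← Finset.mul_sum, ← Finset.mul_sum,
        ← Finset.mul_sum]
      ring
end

section
/- Let λ_1 ≥ λ_2 ≥ … ≥ λ_n ≥ 0 be real numbers, ğ ∈ ℝⁿ, τ > 0, and C > 0 with (1/n)·Σ_{i=1}^n ğ_i² ≤ C. Let r ∈ {1,…,n} be such that λ_r > 0 and ğ_i = 0 for all i > r, and suppose that for some β ∈ [0,2) the spectral survival function S(t) := (1/n)·Σ_{i : λ_i > t} ğ_i² satisfies S(t) ≤ C·(λ_r/t)^β for all t > 0. Then, with ξ := λ_r/τ, the filtered norm satisfies (1/n)·Σ_{i=1}^n ğ_i²·λ_i²/(λ_i + τ)² ≤ C·(ξ² + (2/(2−β))·ξ^β). -/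
open Finset MeasureTheory Set

/-!
Write `wᵢ = ğᵢ² / n`, `L = λ_r` and `ξ = L / τ`. Since `λ / (λ + τ) ≤ min λ τ / τ`, it suffices to bound
`∑ wᵢ νᵢ²` where `νᵢ` is `λᵢ` clamped to `[L, τ]`; as the weights vanish where `λᵢ < L`, the tail
`∑_{t < νᵢ} wᵢ` is at most `S(t) ≤ C (L / t)^β`. The layer-cake identity
`ν² - L² = ∫_L^τ 2t · 1{t < ν} dt` then gives
`∑ wᵢ (νᵢ² - L²) ≤ ∫_L^τ 2t · C (L / t)^β dt = 2τ²C / (2 - β) · (ξ^β - ξ²)`,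
while `∑ wᵢ L² ≤ C L²`. When `τ ≤ L` the bound is trivial because `ξ ≥ 1`.
-/

lemma div_add_le_min_div {x τ : ℝ} (hx : 0 ≤ x) (hτ : 0 < τ) : x / (x + τ) ≤ min x τ / τ := by
  rw [div_le_div_iff₀ (by linarith) hτ]
  rcases le_total x τ with h | h
  · rw [min_eq_left h]; nlinarith
  · rw [min_eq_right h]; nlinarith

lemma integral_indicator_Iio_two_mul {a b c : ℝ} (hc : c ∈ Icc a b) :
    ∫ t in a..b, (Iio c).indicator (fun t ↦ 2 * t) t = c ^ 2 - a ^ 2 := by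
  have hae : (Iio c).indicator (fun t : ℝ ↦ 2 * t) =ᵐ[volume] (Iic c).indicator (fun t ↦ 2 * t) :=
    indicator_ae_eq_of_ae_eq_set Iio_ae_eq_Iic
  rw [intervalIntegral.integral_congr_ae (hae.mono fun _ h _ ↦ h), ← Iic_def,
    intervalIntegral.integral_indicator hc, intervalIntegral.integral_const_mul,
    integral_id]
  ring

lemma sum_mul_sq_sub_sq_le_integral {ι : Type*} (s : Finset ι) (w ν : ι → ℝ) {F : ℝ → ℝ}
    {a b : ℝ} (ha : 0 ≤ a) (hab : a ≤ b) (hν : ∀ i ∈ s, ν i ∈ Icc a b)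
    (hF : IntervalIntegrable F volume a b)
    (hS : ∀ t ∈ Icc a b, ∑ i ∈ s with t < ν i, w i ≤ F t) :
    ∑ i ∈ s, w i * (ν i ^ 2 - a ^ 2) ≤ ∫ t in a..b, 2 * t * F t := by
  -- With `Iio` the integrand matches the strict tail `t < ν i` everywhere, not just a.e.
  have hint : ∀ i ∈ s, IntervalIntegrable (fun t ↦ w i * (Iio (ν i)).indicator (fun t ↦ 2 * t) t)
      volume a b := fun i _ ↦ by
    refine (intervalIntegrable_iff.2 ?_).const_mul _
    exact (intervalIntegrable_iff.1 ((continuous_const.mul continuous_id).intervalIntegrable a b)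
      ).indicator measurableSet_Iio
  have hpt : ∀ t, ∑ i ∈ s, w i * (Iio (ν i)).indicator (fun t ↦ 2 * t) t
      = 2 * t * ∑ i ∈ s with t < ν i, w i := fun t ↦ by
    simp only [indicator_apply, Set.mem_Iio, mul_ite, mul_zero, Finset.sum_ite,
      Finset.sum_const_zero, add_zero, Finset.mul_sum]
    exact Finset.sum_congr rfl fun _ _ ↦ mul_comm _ _
  calc ∑ i ∈ s, w i * (ν i ^ 2 - a ^ 2)
      = ∫ t in a..b, ∑ i ∈ s, w i * (Iio (ν i)).indicator (fun t ↦ 2 * t) t := by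
        rw [intervalIntegral.integral_finsetSum hint]
        refine Finset.sum_congr rfl fun i hi ↦ ?_
        rw [intervalIntegral.integral_const_mul, integral_indicator_Iio_two_mul (hν i hi)]
    _ ≤ ∫ t in a..b, 2 * t * F t := by
      refine intervalIntegral.integral_mono_on hab ?_ (hF.continuousOn_mul (by fun_prop))
        fun t ht ↦ ?_
      · simpa only [Finset.sum_fn] using IntervalIntegrable.sum s hint
      · rw [hpt]
        exact mul_le_mul_of_nonneg_left (hS t ht) (by linarith [ht.1])

lemma integral_two_mul_mul_div_rpow {L τ β : ℝ} (hL : 0 < L) (hLτ : L ≤ τ) (hβ : β < 2) :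
    ∫ t in L..τ, 2 * t * (L / t) ^ β = 2 * τ ^ 2 / (2 - β) * ((L / τ) ^ β - (L / τ) ^ 2) := by
  have hτ : 0 < τ := hL.trans_le hLτ
  have hcongr :
      EqOn (fun t ↦ 2 * t * (L / t) ^ β) (fun t ↦ 2 * L ^ β * t ^ (1 - β)) (uIcc L τ) := by
    intro t ht
    rw [uIcc_of_le hLτ] at ht
    have ht0 : 0 < t := hL.trans_le ht.1
    simp only
    rw [Real.div_rpow hL.le ht0.le, Real.rpow_sub ht0, Real.rpow_one]
    field_simp
  rw [intervalIntegral.integral_congr hcongr, intervalIntegral.integral_const_mul,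
    integral_rpow (Or.inl (by linarith)), show 1 - β + 1 = 2 - β by ring,
    Real.div_rpow hL.le hτ.le, Real.rpow_sub hτ, Real.rpow_sub hL, Real.rpow_two, Real.rpow_two]
  have : 0 < τ ^ β := Real.rpow_pos_of_pos hτ β
  have : 0 < L ^ β := Real.rpow_pos_of_pos hL β
  have : 2 - β ≠ 0 := by linarith
  field_simp

lemma sum_mul_sq_div_sq_le_of_tail_le {ι : Type*} (s : Finset ι) (w ν : ι → ℝ) {L τ C β : ℝ}
    (hL : 0 < L) (hLτ : L ≤ τ) (hβ : β < 2) (hν : ∀ i ∈ s, ν i ∈ Icc L τ) (hW : ∑ i ∈ s, w i ≤ C)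
    (htail : ∀ t ∈ Icc L τ, ∑ i ∈ s with t < ν i, w i ≤ C * (L / t) ^ β) :
    ∑ i ∈ s, w i * (ν i / τ) ^ 2
      ≤ C * ((L / τ) ^ 2 + 2 / (2 - β) * ((L / τ) ^ β - (L / τ) ^ 2)) := by
  have hτ : 0 < τ := hL.trans_le hLτ
  have hF : IntervalIntegrable (fun t ↦ C * (L / t) ^ β) volume L τ := by
    refine ContinuousOn.intervalIntegrable fun t ht ↦ ContinuousAt.continuousWithinAt ?_
    have ht0 : 0 < t := hL.trans_le (uIcc_of_le hLτ ▸ ht).1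
    exact continuousAt_const.mul ((continuousAt_const.div continuousAt_id ht0.ne').rpow_const
      (Or.inl (div_pos hL ht0).ne'))
  have hlayer := sum_mul_sq_sub_sq_le_integral s w ν hL.le hLτ hν hF htail
  simp only [mul_left_comm _ C, intervalIntegral.integral_const_mul,
    integral_two_mul_mul_div_rpow hL hLτ hβ] at hlayer
  calc ∑ i ∈ s, w i * (ν i / τ) ^ 2
      = (L ^ 2 * ∑ i ∈ s, w i + ∑ i ∈ s, w i * (ν i ^ 2 - L ^ 2)) / τ ^ 2 := by
        rw [Finset.mul_sum, ← Finset.sum_add_distrib, Finset.sum_div]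
        exact Finset.sum_congr rfl fun i _ ↦ by field_simp; ring
    _ ≤ (L ^ 2 * C + C * (2 * τ ^ 2 / (2 - β) * ((L / τ) ^ β - (L / τ) ^ 2))) / τ ^ 2 := by
        gcongr
    _ = C * ((L / τ) ^ 2 + 2 / (2 - β) * ((L / τ) ^ β - (L / τ) ^ 2)) := by
        field_simp

theorem sum_mul_sq_div_add_sq_le {ι : Type*} [Fintype ι] (w lam : ι → ℝ) {L τ C β : ℝ}
    (hw : ∀ i, 0 ≤ w i) (hL : 0 < L) (hτ : 0 < τ) (hβ : β < 2)
    (hsupp : ∀ i, w i ≠ 0 → L ≤ lam i) (hW : ∑ i, w i ≤ C)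
    (hS : ∀ t, 0 < t → ∑ i with t < lam i, w i ≤ C * (L / t) ^ β) :
    ∑ i, w i * lam i ^ 2 / (lam i + τ) ^ 2 ≤ C * ((L / τ) ^ 2 + 2 / (2 - β) * (L / τ) ^ β) := by
  set ν : ι → ℝ := fun i ↦ max (min (lam i) τ) L
  have hC : 0 ≤ C := (Finset.sum_nonneg fun i _ ↦ hw i).trans hW
  have hcoef : 0 ≤ 2 / (2 - β) := div_nonneg zero_le_two (by linarith)
  have hclamp : ∑ i, w i * lam i ^ 2 / (lam i + τ) ^ 2 ≤ ∑ i, w i * (ν i / τ) ^ 2 := by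
    refine Finset.sum_le_sum fun i _ ↦ ?_
    rcases eq_or_ne (w i) 0 with hwi | hwi
    · simp [hwi]
    have hlam : 0 ≤ lam i := hL.le.trans (hsupp i hwi)
    rw [mul_div_assoc, ← div_pow]
    refine mul_le_mul_of_nonneg_left (pow_le_pow_left₀ (by positivity) ?_ 2) (hw i)
    exact (div_add_le_min_div hlam hτ).trans
      (div_le_div_of_nonneg_right (le_max_left _ _) hτ.le)
  refine hclamp.trans ?_
  rcases le_or_gt τ L with hτL | hLτ
  · have hν : ∀ i, ν i = L := fun i ↦ max_eq_right ((min_le_right _ _).trans hτL)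
    simp only [hν, ← Finset.sum_mul]
    have hξ : 1 ≤ (L / τ) ^ 2 := one_le_pow₀ ((one_le_div hτ).2 hτL)
    nlinarith [mul_nonneg hcoef (Real.rpow_nonneg (div_pos hL hτ).le β)]
  · have htail : ∀ t ∈ Icc L τ, ∑ i with t < ν i, w i ≤ C * (L / t) ^ β := fun t ht ↦ by
      refine le_trans ?_ (hS t (hL.trans_le ht.1))
      simp only [Finset.sum_filter]
      refine Finset.sum_le_sum fun i _ ↦ ?_
      rcases eq_or_ne (w i) 0 with hwi | hwi
      · simp [hwi]
      have hνlam : ν i ≤ lam i := max_le (min_le_left _ _) (hsupp i hwi)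
      split_ifs with h₁ h₂ <;> first | rfl | exact (h₂ (h₁.trans_le hνlam)).elim | exact hw i
    refine (sum_mul_sq_div_sq_le_of_tail_le Finset.univ w ν hL hLτ.le hβ
      (fun i _ ↦ ⟨le_max_right _ _, max_le (min_le_right _ _) hLτ.le⟩) hW htail).trans ?_
    gcongr
    exact sub_le_self _ (by positivity)

theorem stmt8_general {n : ℕ} (lam : Fin n → ℝ)
    (hord : ∀ i j : Fin n, i ≤ j → lam j ≤ lam i)
    (g : Fin n → ℝ) (τ : ℝ) (hτ : 0 < τ)
    (C : ℝ)
    (hbound : (1/(n:ℝ)) * ∑ i, (g i)^2 ≤ C)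
    (r : Fin n) (hr : 0 < lam r)
    (hg0 : ∀ i : Fin n, r < i → g i = 0)
    (β : ℝ) (hβ2 : β < 2)
    (hS : ∀ t : ℝ, 0 < t →
      (1/(n:ℝ)) * ∑ i ∈ Finset.univ.filter (fun i => t < lam i), (g i)^2
        ≤ C * (lam r / t) ^ β) :
    (1/(n:ℝ)) * ∑ i, (g i)^2 * (lam i)^2 / (lam i + τ)^2
      ≤ C * ((lam r / τ) ^ (2:ℝ) + (2/(2-β)) * (lam r / τ) ^ β) := by
  have hsupp : ∀ i, 1 / (n : ℝ) * g i ^ 2 ≠ 0 → lam r ≤ lam i := fun i hi ↦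
    hord i r (not_lt.1 fun hri ↦ hi (by rw [hg0 i hri]; ring))
  rw [Finset.mul_sum] at hbound ⊢
  simp only [Finset.mul_sum] at hS
  simp only [Real.rpow_two, ← mul_div_assoc, ← mul_assoc]
  exact sum_mul_sq_div_add_sq_le _ lam (fun i ↦ by positivity) hr hτ hβ2 hsupp hbound hS

theorem stmt8 {n : ℕ} (lam : Fin n → ℝ)
    (hord : ∀ i j : Fin n, i ≤ j → lam j ≤ lam i)
    (hnn : ∀ i, 0 ≤ lam i)
    (g : Fin n → ℝ) (τ : ℝ) (hτ : 0 < τ)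
    (C : ℝ) (hC : 0 < C)
    (hbound : (1/(n:ℝ)) * ∑ i, (g i)^2 ≤ C)
    (r : Fin n) (hr : 0 < lam r)
    (hg0 : ∀ i : Fin n, r < i → g i = 0)
    (β : ℝ) (hβ0 : 0 ≤ β) (hβ2 : β < 2)
    (hS : ∀ t : ℝ, 0 < t →
      (1/(n:ℝ)) * ∑ i ∈ Finset.univ.filter (fun i => t < lam i), (g i)^2
        ≤ C * (lam r / t) ^ β) :
    (1/(n:ℝ)) * ∑ i, (g i)^2 * (lam i)^2 / (lam i + τ)^2
      ≤ C * ((lam r / τ) ^ (2:ℝ) + (2/(2-β)) * (lam r / τ) ^ β) :=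
  stmt8_general lam hord g τ hτ C hbound r hr hg0 β hβ2 hS
end

section
/- Let λ_1 ≥ λ_2 ≥ … ≥ λ_n ≥ 0 be real numbers, ğ ∈ ℝⁿ, τ > 0, and C > 0 with (1/n)·Σ_{i=1}^n ğ_i² ≤ C. Let r ∈ {1,…,n} be such that λ_r > 0 and ğ_i = 0 for all i > r, and suppose the spectral survival function S(t) := (1/n)·Σ_{i : λ_i > t} ğ_i² satisfies the tail bound with exponent β = 2: S(t) ≤ C·(λ_r/t)² for all t > 0. If ξ := λ_r/τ < e^{−1/2}, then (1/n)·Σ_{i=1}^n ğ_i²·λ_i²/(λ_i + τ)² ≤ 4C·log(1/ξ)·ξ^{2 − 1/log(1/ξ)}. -/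
/-!
Write `w i = gᵢ² / n` and `S t = ∑_{λᵢ > t} w i`. Pointwise `λ² / (λ + τ)² ≤ min(λ, τ)² / τ²`,
and by the layer-cake formula `∑ w i · min(λᵢ, τ)² = ∫₀^τ 2t · S t dt`. Bounding `S` by `C` on
`[0, λ_r]` and by the tail bound `C (λ_r / t)²` on `[λ_r, τ]` gives `C λ_r² (1 + 2 log (τ / λ_r))`,
that is `C ξ² (1 + 2L)` after dividing by `τ²`, where `L = log (1/ξ)`. Finally
`1 + 2L ≤ 4L ≤ 4eL` as `L > 1/2`, and `e ξ² = ξ ^ (2 - 1/L)`.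
-/

open Real Finset intervalIntegral MeasureTheory

lemma antitone_ite_lt (x : ℝ) : Antitone fun t : ℝ => if t < x then (1 : ℝ) else 0 := by
  intro s t hst
  by_cases ht : t < x
  · simp [ht, hst.trans_lt ht]
  · by_cases hs : s < x <;> simp [ht, hs]

lemma integral_two_mul_ite_lt {x τ : ℝ} (hx : 0 ≤ x) (hτ : 0 ≤ τ) :
    ∫ t in (0 : ℝ)..τ, 2 * t * (if t < x then 1 else 0) = min x τ ^ 2 := by
  set c := min x τ
  have hc : 0 ≤ c := le_min hx hτ
  have hint : ∀ a b : ℝ, IntervalIntegrable (fun t : ℝ => 2 * t * (if t < x then 1 else 0))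
      volume a b :=
    fun a b => (antitone_ite_lt x).intervalIntegrable.continuousOn_mul (by fun_prop)
  have below : ∫ t in (0 : ℝ)..c, 2 * t * (if t < x then 1 else 0) = ∫ t in (0 : ℝ)..c, 2 * t := by
    -- the two integrands may differ at `t = c`, so compare them on the open interval
    rw [integral_of_le hc, integral_of_le hc, integral_Ioc_eq_integral_Ioo,
      integral_Ioc_eq_integral_Ioo]
    refine setIntegral_congr_fun measurableSet_Ioo fun t ht => ?_
    simp [ht.2.trans_le (min_le_left x τ)]
  have above : ∫ t in c..τ, 2 * t * (if t < x then 1 else 0) = 0 := by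
    refine integral_zero_ae (ae_of_all _ fun t ht => ?_)
    rw [Set.uIoc_of_le (min_le_right x τ)] at ht
    have : x < t := (min_lt_iff.mp ht.1).resolve_right ht.2.not_gt
    simp [this.not_gt]
  rw [← integral_add_adjacent_intervals (hint 0 c) (hint c τ), below, above,
    intervalIntegral.integral_const_mul, integral_id]
  ring

lemma sum_mul_min_sq_eq_integral {ι : Type*} (s : Finset ι) (w lam : ι → ℝ)
    (hlam : ∀ i ∈ s, 0 ≤ lam i) {τ : ℝ} (hτ : 0 ≤ τ) :
    ∑ i ∈ s, w i * min (lam i) τ ^ 2 = ∫ t in (0 : ℝ)..τ, 2 * t * ∑ i ∈ s with t < lam i, w i := by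
  have integrand : ∀ t : ℝ, 2 * t * ∑ i ∈ s with t < lam i, w i
      = ∑ i ∈ s, w i * (2 * t * (if t < lam i then 1 else 0)) := by
    intro t
    rw [sum_filter, mul_sum]
    refine sum_congr rfl fun i _ => ?_
    split_ifs <;> ring
  simp_rw [integrand]
  rw [integral_finsetSum fun i _ =>
    ((antitone_ite_lt (lam i)).intervalIntegrable.continuousOn_mul (by fun_prop)).const_mul (w i)]
  refine sum_congr rfl fun i hi => ?_
  rw [intervalIntegral.integral_const_mul, integral_two_mul_ite_lt (hlam i hi) hτ]

lemma integral_two_mul_le_of_le_of_tail_le {S : ℝ → ℝ} {C m τ : ℝ} (hS : Antitone S)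
    (hm : 0 < m) (hmτ : m ≤ τ) (hSC : ∀ t, S t ≤ C) (htail : ∀ t, 0 < t → S t ≤ C * (m / t) ^ 2) :
    ∫ t in (0 : ℝ)..τ, 2 * t * S t ≤ C * m ^ 2 * (1 + 2 * log (τ / m)) := by
  have hint : ∀ a b : ℝ, IntervalIntegrable (fun t => 2 * t * S t) volume a b :=
    fun a b => hS.intervalIntegrable.continuousOn_mul (by fun_prop)
  have head : ∫ t in (0 : ℝ)..m, 2 * t * S t ≤ ∫ t in (0 : ℝ)..m, 2 * C * t :=
    integral_mono_on hm.le (hint 0 m) ((continuous_const_mul (2 * C)).intervalIntegrable 0 m)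
      fun t ht => by nlinarith [hSC t, ht.1]
  have tail : ∫ t in m..τ, 2 * t * S t ≤ ∫ t in m..τ, 2 * C * m ^ 2 * t⁻¹ := by
    refine integral_mono_on hmτ (hint m τ) ?_ fun t ht => ?_
    · refine (intervalIntegrable_inv (fun t ht => ?_) continuousOn_id).const_mul _
      rw [Set.uIcc_of_le hmτ] at ht
      exact (hm.trans_le ht.1).ne'
    · have ht0 : 0 < t := hm.trans_le ht.1
      calc 2 * t * S t ≤ 2 * t * (C * (m / t) ^ 2) := by gcongr; exact htail t ht0
        _ = 2 * C * m ^ 2 * t⁻¹ := by field_simp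
  rw [intervalIntegral.integral_const_mul, integral_id] at head
  rw [intervalIntegral.integral_const_mul, integral_inv_of_pos hm (hm.trans_le hmτ)] at tail
  rw [← integral_add_adjacent_intervals (hint 0 m) (hint m τ)]
  linarith

lemma antitone_sum_filter_lt {ι : Type*} (s : Finset ι) {w : ι → ℝ} (hw : ∀ i ∈ s, 0 ≤ w i)
    (lam : ι → ℝ) : Antitone fun t : ℝ => ∑ i ∈ s with t < lam i, w i :=
  fun _ _ hst =>
    sum_le_sum_of_subset_of_nonneg (monotone_filter_right s fun _ _ h => hst.trans_lt h)
      fun i hi _ => hw i (mem_filter.mp hi).1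

lemma sq_div_add_sq_le {x τ : ℝ} (hx : 0 ≤ x) (hτ : 0 < τ) :
    x ^ 2 / (x + τ) ^ 2 ≤ min x τ ^ 2 / τ ^ 2 := by
  rw [← div_pow, ← div_pow]
  refine pow_le_pow_left₀ (by positivity) ?_ 2
  rw [div_le_div_iff₀ (by positivity) hτ]
  rcases le_total x τ with h | h
  · rw [min_eq_left h]; nlinarith
  · rw [min_eq_right h]; nlinarith

lemma sum_mul_sq_div_add_sq_le_s9 {ι : Type*} (s : Finset ι) {w lam : ι → ℝ}
    (hw : ∀ i ∈ s, 0 ≤ w i) (hlam : ∀ i ∈ s, 0 ≤ lam i) {τ : ℝ} (hτ : 0 < τ) :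
    ∑ i ∈ s, w i * (lam i ^ 2 / (lam i + τ) ^ 2) ≤
      1 / τ ^ 2 * ∑ i ∈ s, w i * min (lam i) τ ^ 2 := by
  rw [mul_sum]
  refine sum_le_sum fun i hi => ?_
  calc w i * (lam i ^ 2 / (lam i + τ) ^ 2) ≤ w i * (min (lam i) τ ^ 2 / τ ^ 2) :=
        mul_le_mul_of_nonneg_left (sq_div_add_sq_le (hlam i hi) hτ) (hw i hi)
    _ = 1 / τ ^ 2 * (w i * min (lam i) τ ^ 2) := by ring

lemma rpow_two_sub_one_div_log_one_div {ξ : ℝ} (h0 : 0 < ξ) (h1 : ξ ≠ 1) :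
    ξ ^ (2 - 1 / log (1 / ξ)) = exp 1 * ξ ^ 2 := by
  have hlog : log ξ ≠ 0 := log_ne_zero_of_pos_of_ne_one h0 h1
  have hexponent : log ξ * (2 - 1 / log (1 / ξ)) = 1 + log ξ + log ξ := by
    rw [one_div ξ, log_inv]; field_simp; ring
  rw [rpow_def_of_pos h0, hexponent, exp_add, exp_add, exp_log h0]
  ring

lemma sq_mul_one_add_two_mul_log_le {ξ : ℝ} (h0 : 0 < ξ) (hξ : ξ < exp (-(1 / 2))) :
    ξ ^ 2 * (1 + 2 * log (1 / ξ)) ≤ 4 * log (1 / ξ) * ξ ^ (2 - 1 / log (1 / ξ)) := by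
  have hL : 1 / 2 < log (1 / ξ) := by
    rw [one_div ξ, log_inv, lt_neg, ← log_exp (-(1 / 2))]
    exact log_lt_log h0 hξ
  have hξ1 : ξ < 1 := hξ.trans (exp_lt_one_iff.mpr (by norm_num))
  rw [rpow_two_sub_one_div_log_one_div h0 hξ1.ne]
  have he : 1 ≤ exp 1 := one_le_exp zero_le_one
  nlinarith [mul_le_mul_of_nonneg_left he (by positivity : 0 ≤ 4 * log (1 / ξ) * ξ ^ 2)]

theorem stmt9_general {n : ℕ} (lam : Fin n → ℝ)
    (hnn : ∀ i, 0 ≤ lam i)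
    (g : Fin n → ℝ) (τ : ℝ) (hτ : 0 < τ)
    (C : ℝ) (hC : 0 < C)
    (hbound : (1/(n:ℝ)) * ∑ i, (g i)^2 ≤ C)
    (r : Fin n) (hr : 0 < lam r)
    (hS : ∀ t : ℝ, 0 < t →
      (1/(n:ℝ)) * ∑ i ∈ Finset.univ.filter (fun i => t < lam i), (g i)^2
        ≤ C * (lam r / t) ^ (2:ℝ))
    (hξ : lam r / τ < Real.exp (-(1/2))) :
    (1/(n:ℝ)) * ∑ i, (g i)^2 * (lam i)^2 / (lam i + τ)^2
      ≤ 4 * C * Real.log (1/(lam r / τ))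
          * (lam r / τ) ^ (2 - 1/Real.log (1/(lam r / τ))) := by
  set ξ := lam r / τ
  have hmτ : lam r < τ := (div_lt_one hτ).mp (hξ.trans (exp_lt_one_iff.mpr (by norm_num)))
  set w : Fin n → ℝ := fun i => 1 / n * g i ^ 2
  have hw : ∀ i ∈ univ, 0 ≤ w i := fun i _ => by positivity
  have hSC : ∀ t, ∑ i with t < lam i, w i ≤ C := fun t =>
    (sum_le_sum_of_subset_of_nonneg (filter_subset _ _) fun i hi _ => hw i hi).trans
      (by rwa [← mul_sum])
  have htail : ∀ t, 0 < t → ∑ i with t < lam i, w i ≤ C * (lam r / t) ^ 2 := fun t ht => by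
    simpa only [w, ← mul_sum, rpow_two] using hS t ht
  calc (1/(n:ℝ)) * ∑ i, (g i)^2 * (lam i)^2 / (lam i + τ)^2
      = ∑ i, w i * (lam i ^ 2 / (lam i + τ) ^ 2) := by
        rw [mul_sum]; exact sum_congr rfl fun i _ => by ring
    _ ≤ 1 / τ ^ 2 * ∑ i, w i * min (lam i) τ ^ 2 :=
        sum_mul_sq_div_add_sq_le_s9 _ hw (fun i _ => hnn i) hτ
    _ = 1 / τ ^ 2 * ∫ t in (0 : ℝ)..τ, 2 * t * ∑ i with t < lam i, w i := by
        rw [sum_mul_min_sq_eq_integral _ _ _ (fun i _ => hnn i) hτ.le]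
    _ ≤ 1 / τ ^ 2 * (C * lam r ^ 2 * (1 + 2 * log (τ / lam r))) := by
        gcongr
        exact integral_two_mul_le_of_le_of_tail_le (antitone_sum_filter_lt _ hw lam) hr hmτ.le
          hSC htail
    _ = C * (ξ ^ 2 * (1 + 2 * log (1 / ξ))) := by rw [one_div_div]; ring
    _ ≤ C * (4 * log (1 / ξ) * ξ ^ (2 - 1 / log (1 / ξ))) :=
        mul_le_mul_of_nonneg_left (sq_mul_one_add_two_mul_log_le (div_pos hr hτ) hξ) hC.le
    _ = _ := by ring

theorem stmt9 {n : ℕ} (lam : Fin n → ℝ)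
    (hord : ∀ i j : Fin n, i ≤ j → lam j ≤ lam i)
    (hnn : ∀ i, 0 ≤ lam i)
    (g : Fin n → ℝ) (τ : ℝ) (hτ : 0 < τ)
    (C : ℝ) (hC : 0 < C)
    (hbound : (1/(n:ℝ)) * ∑ i, (g i)^2 ≤ C)
    (r : Fin n) (hr : 0 < lam r)
    (hg0 : ∀ i : Fin n, r < i → g i = 0)
    (hS : ∀ t : ℝ, 0 < t →
      (1/(n:ℝ)) * ∑ i ∈ Finset.univ.filter (fun i => t < lam i), (g i)^2
        ≤ C * (lam r / t) ^ (2:ℝ))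
    (hξ : lam r / τ < Real.exp (-(1/2))) :
    (1/(n:ℝ)) * ∑ i, (g i)^2 * (lam i)^2 / (lam i + τ)^2
      ≤ 4 * C * Real.log (1/(lam r / τ))
          * (lam r / τ) ^ (2 - 1/Real.log (1/(lam r / τ))) :=
  stmt9_general lam hnn g τ hτ C hC hbound r hr hS hξ
end

section
/- For each n ∈ ℕ, let λ^{(n)}_1 ≥ … ≥ λ^{(n)}_n ≥ 0, ğ^{(n)} ∈ ℝⁿ, τ_n > 0, and r_n ∈ {1,…,n} with λ^{(n)}_{r_n} > 0 and ğ^{(n)}_i = 0 for i > r_n. Let C > 0 satisfy (1/n)·Σ_i (ğ^{(n)}_i)² ≤ C for all n, and suppose there are exponents β_n ∈ [0,2] such that the spectral survival functions satisfy S^{(n)}(t) ≤ C·(λ^{(n)}_{r_n}/t)^{β_n} for all t > 0 and all n. If ξ_n := λ^{(n)}_{r_n}/τ_n → 0 as n → ∞ and liminf_{n→∞} β_n > 0, then the filtered norms vanish: lim_{n→∞} (1/n)·Σ_{i=1}^n (ğ^{(n)}_i)²·(λ^{(n)}_i)²/(λ^{(n)}_i + τ_n)² = 0. -/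
/-- One-step consistency: KRR asymptotically filters out the step component.
Sequences are indexed so that the `n`-th problem has `n + 1` points. -/
theorem stmt13 (lam : (n : ℕ) → Fin (n+1) → ℝ)
    (hord : ∀ n, ∀ i j : Fin (n+1), i ≤ j → lam n j ≤ lam n i)
    (hnn : ∀ n, ∀ i : Fin (n+1), 0 ≤ lam n i)
    (g : (n : ℕ) → Fin (n+1) → ℝ)
    (τ : ℕ → ℝ) (hτ : ∀ n, 0 < τ n)
    (r : (n : ℕ) → Fin (n+1)) (hr : ∀ n, 0 < lam n (r n))
    (hg0 : ∀ n, ∀ i : Fin (n+1), r n < i → g n i = 0)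
    (C : ℝ) (hC : 0 < C)
    (hbound : ∀ n : ℕ, (1/((n:ℝ)+1)) * ∑ i, (g n i)^2 ≤ C)
    (β : ℕ → ℝ) (hβ : ∀ n, β n ∈ Set.Icc (0:ℝ) 2)
    (hS : ∀ n : ℕ, ∀ t : ℝ, 0 < t →
      (1/((n:ℝ)+1)) * ∑ i ∈ Finset.univ.filter (fun i => t < lam n i), (g n i)^2
        ≤ C * (lam n (r n) / t) ^ (β n))
    (hξ : Filter.Tendsto (fun n : ℕ => lam n (r n) / τ n) Filter.atTop (nhds 0))
    (hβliminf : 0 < Filter.liminf β Filter.atTop) :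
    Filter.Tendsto
      (fun n : ℕ => (1/((n:ℝ)+1)) * ∑ i, (g n i)^2 * (lam n i)^2 / (lam n i + τ n)^2)
      Filter.atTop (nhds 0) := by
  set b := Filter.liminf β Filter.atTop with hbdef
  have hb : 0 < b := hβliminf
  -- eventual facts
  have hev1 : ∀ᶠ n in Filter.atTop, lam n (r n) / τ n < 1 :=
    hξ.eventually_lt_const one_pos
  have hev2 : ∀ᶠ n in Filter.atTop, b / 2 < β n :=
    Filter.eventually_lt_of_lt_liminf (show b / 2 < Filter.liminf β Filter.atTop by linarith)
      (Filter.isBoundedUnder_of ⟨0, fun n => (hβ n).1⟩)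
  -- the majorant
  have hmaj : Filter.Tendsto
      (fun n : ℕ => C * (lam n (r n) / τ n) ^ (b/4) + C * (lam n (r n) / τ n))
      Filter.atTop (nhds 0) := by
    have h1 : Filter.Tendsto (fun n : ℕ => (lam n (r n) / τ n) ^ (b/4))
        Filter.atTop (nhds 0) := by
      have := hξ.rpow_const (p := b/4) (Or.inr (by linarith))
      rwa [Real.zero_rpow (by positivity : (b:ℝ)/4 ≠ 0)] at this
    have := ((h1.const_mul C).add (hξ.const_mul C))
    simpa using this
  apply squeeze_zero'
  · filter_upwards with n
    have : (0:ℝ) ≤ ∑ i, (g n i)^2 * (lam n i)^2 / (lam n i + τ n)^2 := by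
      apply Finset.sum_nonneg
      intro i _
      apply div_nonneg (mul_nonneg (sq_nonneg _) (sq_nonneg _)) (sq_nonneg _)
    positivity
  · filter_upwards [hev1, hev2] with n hξ1 hβn
    set L := lam n (r n) with hLdef
    set T := τ n with hTdef
    have hL : 0 < L := hr n
    have hT : 0 < T := hτ n
    have hξpos : 0 < L / T := div_pos hL hT
    set t := Real.sqrt (L * T) with htdef
    have ht : 0 < t := Real.sqrt_pos.2 (mul_pos hL hT)
    have ht2 : t ^ 2 = L * T := Real.sq_sqrt (mul_pos hL hT).le
    have hNpos : (0:ℝ) < 1 / ((n:ℝ)+1) := by positivity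
    -- split the sum
    have hsplit :
        (∑ i ∈ Finset.univ.filter (fun i => t < lam n i),
            (g n i)^2 * (lam n i)^2 / (lam n i + T)^2)
          + ∑ i ∈ Finset.univ.filter (fun i => ¬ t < lam n i),
            (g n i)^2 * (lam n i)^2 / (lam n i + T)^2
        = ∑ i, (g n i)^2 * (lam n i)^2 / (lam n i + T)^2 :=
      Finset.sum_filter_add_sum_filter_not _ _ _
    -- bound on the high-eigenvalue part
    have h1 : (∑ i ∈ Finset.univ.filter (fun i => t < lam n i),
            (g n i)^2 * (lam n i)^2 / (lam n i + T)^2)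
        ≤ ∑ i ∈ Finset.univ.filter (fun i => t < lam n i), (g n i)^2 := by
      apply Finset.sum_le_sum
      intro i _
      have hpos : (0:ℝ) < (lam n i + T)^2 := pow_pos (by linarith [hnn n i]) 2
      rw [div_le_iff₀ hpos]
      nlinarith [hnn n i, sq_nonneg (g n i), mul_nonneg (sq_nonneg (g n i))
        (mul_nonneg (hnn n i) hT.le), mul_nonneg (sq_nonneg (g n i)) (sq_nonneg T)]
    -- bound on the low-eigenvalue part
    have h2 : (∑ i ∈ Finset.univ.filter (fun i => ¬ t < lam n i),
            (g n i)^2 * (lam n i)^2 / (lam n i + T)^2)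
        ≤ ∑ i, (g n i)^2 * (t^2 / T^2) := by
      calc (∑ i ∈ Finset.univ.filter (fun i => ¬ t < lam n i),
            (g n i)^2 * (lam n i)^2 / (lam n i + T)^2)
          ≤ ∑ i ∈ Finset.univ.filter (fun i => ¬ t < lam n i),
            (g n i)^2 * (t^2 / T^2) := by
            apply Finset.sum_le_sum
            intro i hi
            have hle : lam n i ≤ t := not_lt.1 (Finset.mem_filter.1 hi).2
            have h1' : (lam n i)^2 ≤ t^2 := by nlinarith [hnn n i]
            have h2' : T^2 ≤ (lam n i + T)^2 := by nlinarith [hnn n i]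
            rw [mul_div_assoc]
            apply mul_le_mul_of_nonneg_left _ (sq_nonneg (g n i))
            exact div_le_div₀ (sq_nonneg t) h1' (by positivity) h2'
        _ ≤ ∑ i, (g n i)^2 * (t^2 / T^2) := by
            apply Finset.sum_le_sum_of_subset_of_nonneg (Finset.filter_subset _ _)
            intro i _ _
            positivity
    -- combine
    have hcomb : (1/((n:ℝ)+1)) * ∑ i, (g n i)^2 * (lam n i)^2 / (lam n i + T)^2
        ≤ C * (L / t) ^ (β n) + (t^2 / T^2) * C := by
      rw [← hsplit, mul_add]
      have hA : (1/((n:ℝ)+1)) * ∑ i ∈ Finset.univ.filter (fun i => t < lam n i),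
          (g n i)^2 * (lam n i)^2 / (lam n i + T)^2 ≤ C * (L / t) ^ (β n) := by
        calc (1/((n:ℝ)+1)) * ∑ i ∈ Finset.univ.filter (fun i => t < lam n i),
              (g n i)^2 * (lam n i)^2 / (lam n i + T)^2
            ≤ (1/((n:ℝ)+1)) * ∑ i ∈ Finset.univ.filter (fun i => t < lam n i),
              (g n i)^2 := by
              exact mul_le_mul_of_nonneg_left h1 hNpos.le
          _ ≤ C * (L / t) ^ (β n) := hS n t ht
      have hB : (1/((n:ℝ)+1)) * ∑ i ∈ Finset.univ.filter (fun i => ¬ t < lam n i),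
          (g n i)^2 * (lam n i)^2 / (lam n i + T)^2 ≤ (t^2/T^2) * C := by
        calc (1/((n:ℝ)+1)) * ∑ i ∈ Finset.univ.filter (fun i => ¬ t < lam n i),
              (g n i)^2 * (lam n i)^2 / (lam n i + T)^2
            ≤ (1/((n:ℝ)+1)) * ∑ i, (g n i)^2 * (t^2/T^2) := by
              exact mul_le_mul_of_nonneg_left h2 hNpos.le
          _ = (t^2/T^2) * ((1/((n:ℝ)+1)) * ∑ i, (g n i)^2) := by
              rw [← Finset.sum_mul]; ring
          _ ≤ (t^2/T^2) * C := by
              apply mul_le_mul_of_nonneg_left (hbound n) (by positivity)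
      exact add_le_add hA hB
    -- simplify t
    have hsL : 0 < Real.sqrt L := Real.sqrt_pos.2 hL
    have hsT : 0 < Real.sqrt T := Real.sqrt_pos.2 hT
    have hLt : L / t = Real.sqrt (L / T) := by
      rw [Real.sqrt_div hL.le, htdef, Real.sqrt_mul hL.le,
        div_eq_div_iff (mul_pos hsL hsT).ne' hsT.ne']
      linear_combination (-Real.sqrt T) * Real.mul_self_sqrt hL.le
    have ht2T : t^2 / T^2 = L / T := by
      rw [ht2, sq, mul_div_mul_right _ _ hT.ne']
    -- bound the rpow term
    have hrpow : (L / t) ^ (β n) ≤ (L / T) ^ (b/4) := by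
      rw [hLt]
      have hs_pos : 0 < Real.sqrt (L / T) := Real.sqrt_pos.2 hξpos
      have hs_le : Real.sqrt (L / T) ≤ 1 := by
        rw [show (1:ℝ) = Real.sqrt 1 by simp]
        exact Real.sqrt_le_sqrt hξ1.le
      calc Real.sqrt (L / T) ^ (β n) ≤ Real.sqrt (L / T) ^ (b/2) :=
            Real.rpow_le_rpow_of_exponent_ge hs_pos hs_le (by linarith)
        _ = (L / T) ^ (b/4) := by
            rw [Real.sqrt_eq_rpow, ← Real.rpow_mul hξpos.le]
            congr 1; ring
    calc (1/((n:ℝ)+1)) * ∑ i, (g n i)^2 * (lam n i)^2 / (lam n i + τ n)^2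
        ≤ C * (L / t) ^ (β n) + (t^2 / T^2) * C := hcomb
      _ ≤ C * (L / T) ^ (b/4) + (L / T) * C := by
          rw [ht2T]
          exact add_le_add (mul_le_mul_of_nonneg_left hrpow hC.le) le_rfl
      _ = C * (lam n (r n) / τ n) ^ (b/4) + C * (lam n (r n) / τ n) := by ring
  · exact hmaj
end

section
/- Fix a real number α ≥ 1. There exists a constant C_α > 0, depending only on α, such that for every n ≥ 1, with eigenvalues λ_i = i^{−2α} for i = 1,…,n and regularization parameter τ_n = n^{−2α/(2α+1)}, the kernel ridge regression variance term satisfies (1/n)·Σ_{i=1}^n (λ_i/(λ_i + τ_n))² = (1/n)·Σ_{i=1}^n (i^{−2α}/(i^{−2α} + n^{−2α/(2α+1)}))² ≤ C_α·n^{−2α/(2α+1)}. -/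
/-!
With `r = n ^ (1 / (2α + 1))` we have `τ_n = r ^ (-2α) = r / n`, and the `i`-th summand is
`(1 + (i / r) ^ (2α))⁻² ≤ min 1 (r / i) ^ 2`. The terms with `i ≤ r` contribute at most `r`, the
tail `∑_{i > r} (r / i) ^ 2` at most `2 r`, so the average is at most `3 r / n = 3 τ_n`.
-/

open Finset

lemma div_add_le_min_one_div {a b : ℝ} (ha : 0 ≤ a) (hb : 0 < b) : a / (a + b) ≤ min 1 (a / b) :=
  le_min (div_le_one_of_le₀ (by linarith) (by linarith))
    (div_le_div_of_nonneg_left ha hb (by linarith))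

lemma min_one_rpow_le_min_one {y p : ℝ} (hy : 0 ≤ y) (hp : 1 ≤ p) : min 1 (y ^ p) ≤ min 1 y := by
  rcases le_total y 1 with hy1 | hy1
  · exact min_le_min_left 1 (Real.rpow_le_self_of_le_one hy hy1 hp)
  · rw [min_eq_left hy1]
    exact min_le_left _ _

lemma rpow_neg_div_add_rpow_neg_le_min_one {x r p : ℝ} (hx : 0 < x) (hr : 0 < r) (hp : 1 ≤ p) :
    x ^ (-p) / (x ^ (-p) + r ^ (-p)) ≤ min 1 (r / x) := by
  have hratio : x ^ (-p) / r ^ (-p) = (r / x) ^ p := by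
    rw [Real.rpow_neg hx.le, Real.rpow_neg hr.le, Real.div_rpow hr.le hx.le]
    field_simp
  calc x ^ (-p) / (x ^ (-p) + r ^ (-p)) ≤ min 1 (x ^ (-p) / r ^ (-p)) :=
        div_add_le_min_one_div (by positivity) (by positivity)
    _ = min 1 ((r / x) ^ p) := by rw [hratio]
    _ ≤ min 1 (r / x) := min_one_rpow_le_min_one (by positivity) hp

lemma sum_Icc_min_one_div_sq_le {r : ℝ} (hr : 1 ≤ r) (n : ℕ) :
    ∑ i ∈ Icc 1 n, min 1 (r / i) ^ 2 ≤ 3 * r := by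
  set f : ℕ → ℝ := fun i => min 1 (r / i) ^ 2
  set m := ⌊r⌋₊
  have hm1 : 1 ≤ m := Nat.le_floor (by exact_mod_cast hr)
  have hm0 : (0 : ℝ) < m := by exact_mod_cast hm1
  have hmr : (m : ℝ) ≤ r := Nat.floor_le (by linarith)
  have hrm : r ≤ 2 * m := by
    have : (1 : ℝ) ≤ m := by exact_mod_cast hm1
    linarith [Nat.lt_floor_add_one r]
  have head : ∑ i ∈ Ioc 0 m, f i ≤ m := by
    have hf1 : ∀ i ∈ Ioc 0 m, f i ≤ 1 := fun i _ =>
      pow_le_one₀ (le_min zero_le_one (by positivity)) (min_le_left _ _)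
    simpa using sum_le_card_nsmul _ _ 1 hf1
  have tail : ∀ N, m ≤ N → ∑ i ∈ Ioc m N, f i ≤ r ^ 2 * (m : ℝ)⁻¹ := fun N hmN =>
    calc ∑ i ∈ Ioc m N, f i ≤ ∑ i ∈ Ioc m N, r ^ 2 * ((i : ℝ) ^ 2)⁻¹ := by
          refine sum_le_sum fun i _ => ?_
          calc f i ≤ (r / i) ^ 2 := pow_le_pow_left₀ (le_min zero_le_one (by positivity))
                (min_le_right _ _) 2
            _ = r ^ 2 * ((i : ℝ) ^ 2)⁻¹ := by rw [div_pow, div_eq_mul_inv]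
      _ ≤ r ^ 2 * ((m : ℝ)⁻¹ - (N : ℝ)⁻¹) := by
          rw [← mul_sum]
          exact mul_le_mul_of_nonneg_left (sum_Ioc_inv_sq_le_sub (by omega) hmN) (by positivity)
      _ ≤ r ^ 2 * (m : ℝ)⁻¹ := by gcongr; simp
  calc ∑ i ∈ Icc 1 n, f i = ∑ i ∈ Ioc 0 n, f i := by rw [← Icc_add_one_left_eq_Ioc, zero_add]
    _ ≤ ∑ i ∈ Ioc 0 (max m n), f i :=
        sum_le_sum_of_subset_of_nonneg (Ioc_subset_Ioc_right (le_max_right _ _))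
          fun _ _ _ => sq_nonneg _
    _ = ∑ i ∈ Ioc 0 m, f i + ∑ i ∈ Ioc m (max m n), f i :=
        (sum_Ioc_consecutive f (Nat.zero_le m) (le_max_left m n)).symm
    _ ≤ r + r * 2 := by
        gcongr
        · exact head.trans hmr
        · calc ∑ i ∈ Ioc m (max m n), f i ≤ r ^ 2 * (m : ℝ)⁻¹ := tail _ (le_max_left m n)
            _ = r * (r / m) := by ring
            _ ≤ r * 2 := by gcongr; rw [div_le_iff₀ hm0]; linarith
    _ = 3 * r := by ring

theorem stmt15 (α : ℝ) (hα : 1 ≤ α) :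
    ∃ C : ℝ, 0 < C ∧ ∀ n : ℕ, 1 ≤ n →
      (1/(n:ℝ)) * ∑ i ∈ Finset.Icc 1 n,
        ((i:ℝ) ^ (-(2*α)) / ((i:ℝ) ^ (-(2*α)) + (n:ℝ) ^ (-(2*α)/(2*α+1))))^2
      ≤ C * (n:ℝ) ^ (-(2*α)/(2*α+1)) := by
  refine ⟨3, by norm_num, fun n hn => ?_⟩
  have hn0 : (0 : ℝ) < n := by exact_mod_cast hn
  set r : ℝ := (n : ℝ) ^ (1 / (2 * α + 1))
  have hr : 1 ≤ r := Real.one_le_rpow (by exact_mod_cast hn) (by positivity)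
  have hτr : (n : ℝ) ^ (-(2 * α) / (2 * α + 1)) = r ^ (-(2 * α)) := by
    rw [← Real.rpow_mul hn0.le]; congr 1; ring
  have hτn : (n : ℝ) ^ (-(2 * α) / (2 * α + 1)) = r / n := by
    rw [show -(2 * α) / (2 * α + 1) = 1 / (2 * α + 1) - 1 by field_simp; ring,
      Real.rpow_sub hn0, Real.rpow_one]
  have hterm : ∀ i ∈ Icc 1 n,
      ((i : ℝ) ^ (-(2 * α)) / ((i : ℝ) ^ (-(2 * α)) + r ^ (-(2 * α)))) ^ 2 ≤ min 1 (r / i) ^ 2 :=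
    fun i hi => pow_le_pow_left₀ (by positivity)
      (rpow_neg_div_add_rpow_neg_le_min_one (by exact_mod_cast (mem_Icc.1 hi).1)
        (by linarith) (by linarith)) 2
  calc (1 / (n : ℝ)) * ∑ i ∈ Icc 1 n,
          ((i : ℝ) ^ (-(2 * α)) / ((i : ℝ) ^ (-(2 * α)) + (n : ℝ) ^ (-(2 * α) / (2 * α + 1)))) ^ 2
        ≤ (1 / (n : ℝ)) * (3 * r) := by
          rw [hτr]
          gcongr
          exact (sum_le_sum hterm).trans (sum_Icc_min_one_div_sq_le hr n)
    _ = 3 * (n : ℝ) ^ (-(2 * α) / (2 * α + 1)) := by rw [hτn]; ring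
end
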